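/- arXiv:1601.04194 — 8 statements merged into one kernel-verified Lean document; each statement's English description precedes it below -/
import Mathlib

section
/- Let q be a prime power, m ≥ 1, and let a partition of the nonzero vectors of F_q^{2m} be induced by a collection of proper nonzero subspaces (i.e., the subspaces pairwise intersect in 0 and their union is all of F_q^{2m} minus 0). Then the collection has at least q^m + 1 subspaces, with equality if and only if all subspaces have dimension m. -/
/-!
Counting nonzero vectors, the members `X` of the partition satisfy
`∑ (q ^ dim X - 1) = q ^ (2m) - 1`, and two distinct members meet in `0`, so their dimensions
add up to at most `2m`. If every member has dimension at most `m`, each contributes at most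
`q ^ m - 1 = (q ^ (2m) - 1) / (q ^ m + 1)`, which gives the bound, with equality exactly when all
dimensions are `m`. If some member has dimension `a > m`, the others have dimension at most
`2m - a`, and must cover the remaining `q ^ a (q ^ (2m - a) - 1)` vectors; so there are at least
`q ^ a ≥ q ^ (m + 1)` of them.
-/

open Finset Module

def IsVectorSpacePartition {R V : Type*} [Semiring R] [AddCommMonoid V] [Module R V]
    (S : Set (Submodule R V)) : Prop :=
  ∀ v : V, v ≠ 0 → ∃! X, X ∈ S ∧ v ∈ X

namespace IsVectorSpacePartition

section Semiring

variable {R V : Type*} [Semiring R] [AddCommMonoid V] [Module R V] {S : Set (Submodule R V)}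

theorem eq_of_mem_of_mem (h : IsVectorSpacePartition S) {v : V} (hv : v ≠ 0)
    {X Y : Submodule R V} (hX : X ∈ S) (hY : Y ∈ S) (hvX : v ∈ X) (hvY : v ∈ Y) : X = Y :=
  (h v hv).unique ⟨hX, hvX⟩ ⟨hY, hvY⟩

theorem disjoint (h : IsVectorSpacePartition S) {X Y : Submodule R V} (hX : X ∈ S) (hY : Y ∈ S)
    (hXY : X ≠ Y) : Disjoint X Y :=
  Submodule.disjoint_def.2 fun _ hvX hvY ↦
    by_contra fun hv ↦ hXY (h.eq_of_mem_of_mem hv hX hY hvX hvY)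

theorem sum_card_sub_one [Fintype V] {s : Finset (Submodule R V)}
    (h : IsVectorSpacePartition (s : Set (Submodule R V))) :
    ∑ X ∈ s, (Nat.card X - 1) = Nat.card V - 1 := by
  classical
  let punctured : Submodule R V → Finset V := fun X ↦ (univ.filter (· ∈ X)).erase 0
  have hcard (X : Submodule R V) : (punctured X).card = Nat.card X - 1 := by
    rw [card_erase_of_mem (by simp [X.zero_mem]), Nat.card_eq_fintype_card, Fintype.card_subtype]
  have hdisj : (s : Set (Submodule R V)).PairwiseDisjoint punctured := by
    intro X hX Y hY hXY
    refine disjoint_left.2 fun v hvX hvY ↦ ?_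
    simp only [punctured, mem_erase, mem_filter] at hvX hvY
    exact hXY (h.eq_of_mem_of_mem hvX.1 hX hY hvX.2.2 hvY.2.2)
  have hunion : s.biUnion punctured = univ.erase 0 := by
    ext v
    simp only [punctured, mem_biUnion, mem_erase, mem_filter, mem_univ, true_and, and_true]
    refine ⟨fun ⟨_, _, hv, _⟩ ↦ hv, fun hv ↦ ?_⟩
    obtain ⟨X, ⟨hX, hvX⟩, -⟩ := h v hv
    exact ⟨X, hX, hv, hvX⟩
  rw [← sum_congr rfl fun X _ ↦ hcard X, ← card_biUnion hdisj, hunion,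
    card_erase_of_mem (mem_univ 0), card_univ, Nat.card_eq_fintype_card]

end Semiring

theorem finrank_add_finrank_le {K V : Type*} [DivisionRing K] [AddCommGroup V] [Module K V]
    [FiniteDimensional K V] {S : Set (Submodule K V)} (h : IsVectorSpacePartition S)
    {X Y : Submodule K V} (hX : X ∈ S) (hY : Y ∈ S) (hXY : X ≠ Y) :
    finrank K X + finrank K Y ≤ finrank K V :=
  Submodule.finrank_add_finrank_le_of_disjoint (h.disjoint hX hY hXY)

end IsVectorSpacePartition

theorem pow_lt_card_of_sum_pow_sub_one_eq {ι : Type*} {s : Finset ι} {f : ι → ℕ}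
    {q n : ℕ} (hq : 1 < q) {i : ι} (hi : i ∈ s) (hfi : f i < n)
    (hrest : ∀ j ∈ s, j ≠ i → f i + f j ≤ n) (hsum : ∑ j ∈ s, (q ^ f j - 1) = q ^ n - 1) :
    q ^ f i < s.card := by
  classical
  obtain ⟨b, rfl⟩ : ∃ b, n = f i + b := ⟨n - f i, by omega⟩
  have hb : 1 < q ^ b := Nat.one_lt_pow (by omega) hq
  have hrest_le : ∑ j ∈ s.erase i, (q ^ f j - 1) ≤ (s.card - 1) * (q ^ b - 1) := by
    rw [← card_erase_of_mem hi, ← smul_eq_mul]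
    refine sum_le_card_nsmul _ _ _ fun j hj ↦
      Nat.sub_le_sub_right (Nat.pow_le_pow_right (by omega) ?_) 1
    have := hrest j (mem_of_mem_erase hj) (ne_of_mem_erase hj)
    omega
  -- `q ^ (f i + b) - 1 = (q ^ f i - 1) + q ^ f i * (q ^ b - 1)`
  have hsplit : q ^ f i * (q ^ b - 1) = ∑ j ∈ s.erase i, (q ^ f j - 1) := by
    have h1 : 1 ≤ q ^ f i := Nat.one_le_pow _ _ (by omega)
    have := add_sum_erase s (fun j ↦ q ^ f j - 1) hi
    rw [hsum, pow_add] at this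
    rw [Nat.mul_sub_one]
    omega
  have : q ^ f i ≤ s.card - 1 :=
    Nat.le_of_mul_le_mul_right (hsplit ▸ hrest_le) (by omega)
  have : q ^ f i ≠ 0 := by positivity
  omega

theorem pow_add_one_le_card_and_card_eq_iff {ι : Type*} {s : Finset ι} {f : ι → ℕ}
    {q m : ℕ} (hq : 1 < q) (hm : 1 ≤ m) (hle : ∀ i ∈ s, f i ≤ m)
    (hsum : ∑ i ∈ s, (q ^ f i - 1) = q ^ (2 * m) - 1) :
    q ^ m + 1 ≤ s.card ∧ (s.card = q ^ m + 1 ↔ ∀ i ∈ s, f i = m) := by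
  have hc : 0 < q ^ m - 1 := by have := Nat.one_lt_pow (by omega : m ≠ 0) hq; omega
  have hfac : q ^ (2 * m) - 1 = (q ^ m + 1) * (q ^ m - 1) := by
    rw [← Nat.sq_sub_sq, one_pow, ← pow_mul, mul_comm]
  have hterm : ∀ i ∈ s, q ^ f i - 1 ≤ q ^ m - 1 := fun i hi ↦
    Nat.sub_le_sub_right (Nat.pow_le_pow_right (by omega) (hle i hi)) 1
  have hbound : (q ^ m + 1) * (q ^ m - 1) ≤ s.card * (q ^ m - 1) := by
    rw [← hfac, ← hsum, ← smul_eq_mul]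
    exact sum_le_card_nsmul _ _ _ hterm
  refine ⟨Nat.le_of_mul_le_mul_right hbound hc, ?_⟩
  calc s.card = q ^ m + 1 ↔ ∑ i ∈ s, (q ^ f i - 1) = ∑ _i ∈ s, (q ^ m - 1) := by
        rw [hsum, hfac, sum_const, smul_eq_mul, Nat.mul_left_inj hc.ne', eq_comm]
    _ ↔ ∀ i ∈ s, q ^ f i - 1 = q ^ m - 1 := sum_eq_sum_iff_of_le hterm
    _ ↔ ∀ i ∈ s, f i = m := by
        refine forall₂_congr fun i _ ↦ ?_
        rw [tsub_left_inj (Nat.one_le_pow _ _ (by omega)) (Nat.one_le_pow _ _ (by omega)),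
          pow_right_inj₀ (by omega) hq.ne']

theorem stmt_0_general (q m : ℕ) (hm : 1 ≤ m)
    (K : Type) [Field K] [Fintype K] (hK : Fintype.card K = q)
    (S : Set (Submodule K (Fin (2 * m) → K)))
    (hproper : ∀ X ∈ S, X ≠ ⊤)
    (hpart : ∀ v : Fin (2 * m) → K, v ≠ 0 → ∃! X, X ∈ S ∧ v ∈ X) :
    q ^ m + 1 ≤ S.ncard ∧
      (S.ncard = q ^ m + 1 ↔ ∀ X ∈ S, Module.finrank K X = m) := by
  have hq : 1 < q := hK ▸ Fintype.one_lt_card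
  have hV : finrank K (Fin (2 * m) → K) = 2 * m := finrank_fin_fun K
  obtain ⟨s, rfl⟩ := S.toFinite.exists_finset_coe
  have hS : IsVectorSpacePartition (s : Set (Submodule K (Fin (2 * m) → K))) := hpart
  have hsum : ∑ X ∈ s, (q ^ finrank K X - 1) = q ^ (2 * m) - 1 := by
    have hcard (W : Submodule K (Fin (2 * m) → K)) : Nat.card W = q ^ finrank K W := by
      rw [natCard_eq_pow_finrank (K := K), Nat.card_eq_fintype_card, hK]
    have hcardV : Nat.card (Fin (2 * m) → K) = q ^ (2 * m) := by
      rw [natCard_eq_pow_finrank (K := K), Nat.card_eq_fintype_card, hK, hV]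
    simpa only [hcard, hcardV] using hS.sum_card_sub_one
  simp only [Set.ncard_coe_finset, Finset.mem_coe]
  by_cases hsmall : ∀ X ∈ s, finrank K X ≤ m
  · exact pow_add_one_le_card_and_card_eq_iff hq hm hsmall hsum
  push Not at hsmall
  obtain ⟨X, hX, hmX⟩ := hsmall
  have hlt : q ^ m + 1 < s.card := calc
    q ^ m + 1 < q ^ finrank K X + 1 := by gcongr
    _ ≤ s.card := pow_lt_card_of_sum_pow_sub_one_eq hq hX
      ((Submodule.finrank_lt (hproper X hX)).trans_eq hV)
      (fun Y hY hYX ↦ (hS.finrank_add_finrank_le hX hY hYX.symm).trans_eq hV) hsum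
  exact ⟨hlt.le, iff_of_false hlt.ne' fun h ↦ hmX.ne' (h X hX)⟩

/-- A collection of proper nonzero subspaces of `F_q^{2m}` that
partitions the nonzero vectors has at least `q^m + 1` members, with equality
iff all members have dimension `m`. -/
theorem stmt_0 (q m : ℕ) (hq : IsPrimePow q) (hm : 1 ≤ m)
    (K : Type) [Field K] [Fintype K] (hK : Fintype.card K = q)
    (S : Set (Submodule K (Fin (2 * m) → K)))
    (hne : ∀ X ∈ S, X ≠ ⊥) (hproper : ∀ X ∈ S, X ≠ ⊤)
    (hpart : ∀ v : Fin (2 * m) → K, v ≠ 0 → ∃! X, X ∈ S ∧ v ∈ X) :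
    q ^ m + 1 ≤ S.ncard ∧
      (S.ncard = q ^ m + 1 ↔ ∀ X ∈ S, Module.finrank K X = m) :=
  stmt_0_general q m hm K hK S hproper hpart
end

section
/- Let q be a prime power and m ≥ 1. Let F = F_{q^{2m}}, E = F_{q^m}, K = F_q, and T : F → K the trace map. Then the set {x ∈ F : T(xE) = 0} equals θE for some θ ∈ F. -/
/-!
Transitivity of the trace gives `T(x e) = Tr_{E/K}(Tr_{F/E}(x) e)`, so by nondegeneracy of the
trace form of the separable extension `E/K`, `T(xE) = 0` exactly when `Tr_{F/E}(x) = 0`. Since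
`[F : E] = 2` and `Tr_{F/E}` is a nonzero `E`-linear functional, its kernel is a line `θE`.
-/

open Module

theorem Module.Dual.isPrincipal_ker_of_finrank_le_two {K V : Type*} [Field K] [AddCommGroup V]
    [Module K V] [FiniteDimensional K V] {f : Dual K V} (hf : f ≠ 0) (hV : finrank K V ≤ 2) :
    (LinearMap.ker f).IsPrincipal := by
  rw [← Submodule.finrank_le_one_iff_isPrincipal]
  have := Dual.finrank_ker_add_one_of_ne_zero hf
  omega

theorem Module.finrank_eq_of_card_eq_pow {K V : Type*} [Field K] [AddCommGroup V] [Module K V]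
    [Fintype K] [Fintype V] {n : ℕ} (h : Fintype.card V = Fintype.card K ^ n) :
    finrank K V = n :=
  Nat.pow_right_injective Fintype.one_lt_card (card_eq_pow_finrank.symm.trans h)

theorem Algebra.trace_mul_algebraMap_eq_zero_iff {K E F : Type*} [Field K] [Field E] [Field F]
    [Algebra K E] [Algebra E F] [Algebra K F] [IsScalarTower K E F]
    [FiniteDimensional K E] [FiniteDimensional E F] [Algebra.IsSeparable K E] (x : F) :
    (∀ e : E, trace K F (x * algebraMap E F e) = 0) ↔ trace E F x = 0 := by
  have trace_mul (e : E) : trace K F (x * algebraMap E F e) = trace K E (trace E F x * e) := by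
    rw [← trace_trace (S := E), mul_comm, ← smul_def, map_smul, smul_eq_mul, mul_comm]
  simp only [trace_mul]
  exact ⟨(traceForm_nondegenerate K E).1 _, fun h e => by rw [h, zero_mul, map_zero]⟩

theorem stmt_1_general (q m : ℕ)
    (K E F : Type) [Field K] [Field E] [Field F]
    [Algebra K E] [Algebra E F] [Algebra K F] [IsScalarTower K E F]
    [Fintype K] [Fintype E] [Fintype F]
    (hE : Fintype.card E = q ^ m)
    (hF : Fintype.card F = q ^ (2 * m)) :
    ∃ θ : F,
      {x : F | ∀ e : E, Algebra.trace K F (x * algebraMap E F e) = 0} =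
        {y : F | ∃ e : E, y = θ * algebraMap E F e} := by
  have hrank : Module.finrank E F = 2 :=
    Module.finrank_eq_of_card_eq_pow (by rw [hF, hE, mul_comm, pow_mul])
  obtain ⟨θ, hθ⟩ := (Module.Dual.isPrincipal_ker_of_finrank_le_two
    (Algebra.trace_ne_zero E F) hrank.le).principal
  refine ⟨θ, Set.ext fun x => ?_⟩
  rw [Set.mem_ofPred_eq, Algebra.trace_mul_algebraMap_eq_zero_iff, ← LinearMap.mem_ker, hθ,
    Submodule.mem_span_singleton]
  simp only [Set.mem_ofPred_eq, Algebra.smul_def, mul_comm θ, eq_comm]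

/-- With `K = F_q ⊆ E = F_{q^m} ⊆ F = F_{q^{2m}}` and `T` the trace
map `F → K`, the set `{x ∈ F : T(xE) = 0}` equals `θE` for some `θ ∈ F`. -/
theorem stmt_1 (q m : ℕ) (hq : IsPrimePow q) (hm : 1 ≤ m)
    (K E F : Type) [Field K] [Field E] [Field F]
    [Algebra K E] [Algebra E F] [Algebra K F] [IsScalarTower K E F]
    [Fintype K] [Fintype E] [Fintype F]
    (hK : Fintype.card K = q) (hE : Fintype.card E = q ^ m)
    (hF : Fintype.card F = q ^ (2 * m)) :
    ∃ θ : F,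
      {x : F | ∀ e : E, Algebra.trace K F (x * algebraMap E F e) = 0} =
        {y : F | ∃ e : E, y = θ * algebraMap E F e} :=
  stmt_1_general q m K E F hE hF
end

section
/- Let q be a prime power, m ≥ 1, F = F_{q^{2m}} ⊇ E = F_{q^m} ⊇ K = F_q, T : F → K the trace map, and θ ∈ F with {x ∈ F : T(xE) = 0} = θE. Equip V = F² with the alternating K-bilinear form f((x,y),(x',y')) = T(xy') − T(x'y). Let Σ_⋆ consist of the K-subspaces [x = 0] = {(0,y) : y ∈ F} and [y = aθx] = {(x, aθx) : x ∈ F} for a ∈ E. Then the number of totally isotropic 2m-dimensional K-subspaces Z of V that meet each member of Σ_⋆ in an m-dimensional K-subspace is exactly gcd(2, q−1), and if there are two such subspaces they intersect in 0. -/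
/-!
Let `X` and `Y` be the intersections of `Z` with `[y = 0]` and `[x = 0]`. Dimension counting
forces `Z = X × Y` with `dim X = dim Y = m`, and the conditions on `Z` become `aθX ⊆ Y` for all
`a ∈ E` and `T(XY) = 0`. Hence `T(θxx'E) = 0` for `x, x' ∈ X`, so `xx' ∈ E`; this gives
`X = cE` and `Y = cθE` with `c² ∈ E`, and conversely every such `cE × cθE` qualifies.
Distinct lines `cE` meet in `0`, so it remains to count the lines `cE` with `c² ∈ E`. In
characteristic `2` every element of `E` is a square, so `cE = E`. Otherwise a nonsquare `u` of
`E` is a square `w²` in `F`, and `c² ∈ E` gives `cE = E` or `cE = wE`.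
-/

open Module

namespace Submodule

variable {K V W : Type*} [Field K] [AddCommGroup V] [Module K V] [AddCommGroup W] [Module K W]

theorem finrank_prod [FiniteDimensional K V] [FiniteDimensional K W]
    (p : Submodule K V) (q : Submodule K W) :
    finrank K (p.prod q) = finrank K p + finrank K q := by
  have h := LinearMap.finrank_range_of_inj (f := p.subtype.prodMap q.subtype)
    (Subtype.val_injective.prodMap Subtype.val_injective)
  rwa [LinearMap.range_prodMap, range_subtype, range_subtype, Module.finrank_prod] at h

theorem finrank_inf_range {f : W →ₗ[K] V} (hf : Function.Injective f) (Z : Submodule K V) :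
    finrank K ↥(Z ⊓ LinearMap.range f) = finrank K (Z.comap f) := by
  rw [inf_comm, ← map_comap_eq]
  exact (equivMapOfInjective f hf _).finrank_eq.symm

theorem finrank_prod_inf_graph (X : Submodule K V) (Y : Submodule K W) (g : V →ₗ[K] W) :
    finrank K ↥(X.prod Y ⊓ g.graph) = finrank K ↥(X ⊓ Y.comap g) := by
  rw [LinearMap.graph_eq_range_prod, finrank_inf_range (fun _ _ h => congrArg Prod.fst h),
    LinearMap.comap_prod_prod, comap_id]

theorem finrank_prod_inf_graph_eq_iff [FiniteDimensional K V] {X : Submodule K V}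
    {Y : Submodule K W} {g : V →ₗ[K] W} :
    finrank K ↥(X.prod Y ⊓ g.graph) = finrank K X ↔ X ≤ Y.comap g := by
  rw [finrank_prod_inf_graph, ← inf_eq_left]
  exact ⟨eq_of_le_of_finrank_eq inf_le_left, fun h => by rw [h]⟩

theorem eq_prod_comap_inl_comap_inr [FiniteDimensional K V] [FiniteDimensional K W]
    {Z : Submodule K (V × W)}
    (h : finrank K Z ≤
      finrank K (Z.comap (LinearMap.inl K V W)) + finrank K (Z.comap (LinearMap.inr K V W))) :
    Z = (Z.comap (LinearMap.inl K V W)).prod (Z.comap (LinearMap.inr K V W)) := by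
  refine (eq_of_le_of_finrank_le ?_ (by rwa [finrank_prod])).symm
  rintro ⟨x, y⟩ ⟨hx, hy⟩
  simpa using Z.add_mem hx hy

end Submodule

section FiniteField

variable {E F : Type*} [Field E] [Field F] [Algebra E F]

theorem FiniteField.gcd_two_card_sub_one (K : Type*) [Field K] [Fintype K] :
    Nat.gcd 2 (Fintype.card K - 1) = if ringChar K = 2 then 1 else 2 := by
  have hcard : 1 < Fintype.card K := Fintype.one_lt_card
  rw [Nat.gcd_rec]
  split_ifs with h <;> rw [FiniteField.even_card_iff_char_two] at h
  · rw [show (Fintype.card K - 1) % 2 = 1 by omega]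
    rfl
  · rw [show (Fintype.card K - 1) % 2 = 0 by omega]
    rfl

theorem FiniteField.isSquare_mul_of_not_isSquare [Fintype E] {a b : E}
    (ha : ¬IsSquare a) (hb : ¬IsSquare b) : IsSquare (a * b) := by
  classical
  have hab : a * b ≠ 0 := mul_ne_zero (by rintro rfl; exact ha IsSquare.zero)
    (by rintro rfl; exact hb IsSquare.zero)
  rw [← quadraticChar_one_iff_isSquare hab, map_mul,
    quadraticChar_neg_one_iff_not_isSquare.2 ha, quadraticChar_neg_one_iff_not_isSquare.2 hb,
    neg_one_mul, neg_neg]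

theorem FiniteField.isSquare_algebraMap_of_card_eq_sq [Fintype E] [Fintype F]
    (hF : ringChar F ≠ 2) (hcard : Fintype.card F = Fintype.card E ^ 2) (e : E) :
    IsSquare (algebraMap E F e) := by
  rcases eq_or_ne e 0 with rfl | he
  · simp
  rw [FiniteField.isSquare_iff hF ((map_ne_zero _).2 he)]
  have hodd : Fintype.card E % 2 = 1 :=
    FiniteField.odd_card_of_char_ne_two (Algebra.ringChar_eq E F ▸ hF)
  obtain ⟨k, hk⟩ : ∃ k, Fintype.card E = 2 * k + 1 := ⟨Fintype.card E / 2, by omega⟩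
  have hexp : Fintype.card F / 2 = (Fintype.card E - 1) * (k + 1) := by
    rw [hcard, hk, Nat.add_sub_cancel]
    have : (2 * k + 1) ^ 2 = 2 * (2 * k * (k + 1)) + 1 := by ring
    omega
  rw [hexp, pow_mul, ← map_pow, FiniteField.pow_card_sub_one_eq_one e he, map_one, one_pow]

end FiniteField

section

variable {K E F : Type*} [Field K] [Field E] [Field F]
  [Algebra K E] [Algebra E F] [Algebra K F] [IsScalarTower K E F]

variable (K E) in
/-- The line `cE`, as a `K`-subspace of `F`. -/
noncomputable def eLine (c : F) : Submodule K F :=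
  LinearMap.range (LinearMap.mulRight K c ∘ₗ (IsScalarTower.toAlgHom K E F).toLinearMap)

theorem mem_eLine {c x : F} : x ∈ eLine K E c ↔ ∃ e : E, algebraMap E F e * c = x := by
  simp [eLine]

theorem self_mem_eLine (c : F) : c ∈ eLine K E c :=
  mem_eLine.2 ⟨1, by simp⟩

theorem finrank_eLine {c : F} (hc : c ≠ 0) : finrank K (eLine K E c) = finrank K E :=
  LinearMap.finrank_range_of_inj fun a b h => by simpa [hc] using h

theorem eLine_le_of_mem {c x : F} (h : x ∈ eLine K E c) : eLine K E x ≤ eLine K E c := by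
  obtain ⟨e, rfl⟩ := mem_eLine.1 h
  rintro _ ⟨d, rfl⟩
  exact mem_eLine.2 ⟨d * e, by simp [mul_assoc]⟩

theorem eLine_eq_of_mem {c x : F} (hx : x ≠ 0) (h : x ∈ eLine K E c) :
    eLine K E x = eLine K E c := by
  refine le_antisymm (eLine_le_of_mem h) (eLine_le_of_mem ?_)
  obtain ⟨e, rfl⟩ := mem_eLine.1 h
  have he : algebraMap E F e ≠ 0 := left_ne_zero_of_mul hx
  exact mem_eLine.2 ⟨e⁻¹, by rw [map_inv₀, ← mul_assoc, inv_mul_cancel₀ he, one_mul]⟩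

theorem eLine_inf_eq_bot {c c' : F} (h : eLine K E c ≠ eLine K E c') :
    eLine K E c ⊓ eLine K E c' = ⊥ := by
  refine (Submodule.eq_bot_iff _).2 fun x ⟨hx, hx'⟩ => ?_
  by_contra hx0
  exact h ((eLine_eq_of_mem hx0 hx).symm.trans (eLine_eq_of_mem hx0 hx'))

theorem eLine_mul (c θ : F) : eLine K E (c * θ) = (eLine K E c).map (LinearMap.mulRight K θ) := by
  rw [eLine, eLine, ← LinearMap.range_comp, ← LinearMap.comp_assoc, LinearMap.mulRight_mul]

theorem mem_eLine_of_mul_self_eq {c w : F} {d : E}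
    (h : c * c = (algebraMap E F d * w) * (algebraMap E F d * w)) : c ∈ eLine K E w := by
  rcases mul_self_eq_mul_self_iff.1 h with h | h
  · exact mem_eLine.2 ⟨d, h.symm⟩
  · exact mem_eLine.2 ⟨-d, by rw [h, map_neg, neg_mul]⟩

theorem eLine_zero : eLine K E (0 : F) = ⊥ := by
  simp [eLine]

variable (K E) in
noncomputable def traceAnnihilator : Submodule K F :=
  LinearMap.ker ((Algebra.traceForm K F).compl₂ (IsScalarTower.toAlgHom K E F).toLinearMap)

theorem mem_traceAnnihilator {x : F} :
    x ∈ traceAnnihilator K E ↔ ∀ e : E, Algebra.trace K F (x * algebraMap E F e) = 0 := by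
  simp [traceAnnihilator, LinearMap.ext_iff]

theorem traceAnnihilator_ne_bot [FiniteDimensional K F] (h : finrank K E < finrank K F) :
    (traceAnnihilator K E : Submodule K F) ≠ ⊥ := by
  have : FiniteDimensional K E :=
    .of_injective (IsScalarTower.toAlgHom K E F).toLinearMap (algebraMap E F).injective
  exact LinearMap.ker_ne_bot_of_finrank_lt (by rwa [Module.finrank_linearMap_self])

variable (K E) in
def sigmaStar (θ : F) : Set (Submodule K (F × F)) :=
  {LinearMap.ker (LinearMap.fst K F F)} ∪
    {W | ∃ a : E, W = LinearMap.graph (LinearMap.mulLeft K (algebraMap E F a * θ))}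

variable (K E) in
def IsAdmissible (θ : F) (Z : Submodule K (F × F)) : Prop :=
  finrank K Z = 2 * finrank K E ∧
    (∀ u ∈ Z, ∀ v ∈ Z, Algebra.trace K F (u.1 * v.2) - Algebra.trace K F (v.1 * u.2) = 0) ∧
    ∀ W ∈ sigmaStar K E θ, finrank K ↥(Z ⊓ W) = finrank K E

variable (K E) in
noncomputable def eLineProd (θ c : F) : Submodule K (F × F) :=
  (eLine K E c).prod (eLine K E (c * θ))

theorem exists_eq_eLine_of_trace_mul_eq_zero [FiniteDimensional K E] [FiniteDimensional K F]
    {θ : F} (hθ : traceAnnihilator K E = eLine K E θ) (hθ0 : θ ≠ 0) {X Y : Submodule K F}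
    (hX : finrank K X = finrank K E) (hY : finrank K Y = finrank K E)
    (hXY : ∀ x ∈ X, ∀ y ∈ Y, Algebra.trace K F (x * y) = 0)
    (hθX : ∀ a : E, ∀ x ∈ X, algebraMap E F a * θ * x ∈ Y) :
    ∃ c ≠ 0, (∃ e : E, c * c = algebraMap E F e) ∧ X = eLine K E c ∧ Y = eLine K E (c * θ) := by
  have hmul : ∀ x ∈ X, ∀ x' ∈ X, ∃ e : E, x * x' = algebraMap E F e := by
    intro x hx x' hx'
    have h : θ * (x * x') ∈ eLine K E θ := hθ ▸ mem_traceAnnihilator.2 fun a => by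
      rw [show θ * (x * x') * algebraMap E F a = x' * (algebraMap E F a * θ * x) by ring]
      exact hXY x' hx' _ (hθX a x hx)
    obtain ⟨e, he⟩ := mem_eLine.1 h
    exact ⟨e, mul_left_cancel₀ hθ0 (by linear_combination -he)⟩
  obtain ⟨x₀, hx₀, hx₀0⟩ := (Submodule.ne_bot_iff X).1 fun h => by
    rw [h, finrank_bot] at hX
    exact Module.finrank_pos.ne hX
  have hX_eq : X = eLine K E x₀⁻¹ := by
    refine Submodule.eq_of_le_of_finrank_eq (fun x hx => ?_)
      (by rw [hX, finrank_eLine (inv_ne_zero hx₀0)])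
    obtain ⟨e, he⟩ := hmul x₀ hx₀ x hx
    exact mem_eLine.2 ⟨e, by rw [← he]; field_simp⟩
  have hY_eq : Y = eLine K E (x₀⁻¹ * θ) := by
    refine (Submodule.eq_of_le_of_finrank_eq (fun y hy => ?_)
      (by rw [hY, finrank_eLine (mul_ne_zero (inv_ne_zero hx₀0) hθ0)])).symm
    obtain ⟨e, rfl⟩ := mem_eLine.1 hy
    convert hθX e _ (hX_eq ▸ self_mem_eLine x₀⁻¹) using 1
    ring
  obtain ⟨e, he⟩ := hmul x₀ hx₀ x₀ hx₀
  exact ⟨x₀⁻¹, inv_ne_zero hx₀0, ⟨e⁻¹, by rw [map_inv₀, ← he, mul_inv]⟩, hX_eq, hY_eq⟩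

theorem IsAdmissible.exists_eq_eLineProd [FiniteDimensional K E] [FiniteDimensional K F]
    {θ : F} (hθ : traceAnnihilator K E = eLine K E θ) (hθ0 : θ ≠ 0) {Z : Submodule K (F × F)}
    (hZ : IsAdmissible K E θ Z) :
    ∃ c ≠ 0, (∃ e : E, c * c = algebraMap E F e) ∧ Z = eLineProd K E θ c := by
  obtain ⟨hrank, hiso, hstar⟩ := hZ
  set X := Z.comap (LinearMap.inl K F F)
  set Y := Z.comap (LinearMap.inr K F F)
  have hY : finrank K Y = finrank K E := by
    rw [← hstar _ (Or.inl rfl), LinearMap.ker_fst,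
      Submodule.finrank_inf_range LinearMap.inr_injective]
  have hX : finrank K X = finrank K E := by
    rw [← hstar _ (Or.inr ⟨0, rfl⟩), map_zero, zero_mul, LinearMap.mulLeft_zero_eq_zero,
      LinearMap.graph_eq_range_prod, ← LinearMap.inl_eq_prod,
      Submodule.finrank_inf_range LinearMap.inl_injective]
  have hZ : Z = X.prod Y :=
    Submodule.eq_prod_comap_inl_comap_inr (by rw [hrank, hX, hY, two_mul])
  have hθX : ∀ a : E, ∀ x ∈ X, algebraMap E F a * θ * x ∈ Y := by
    intro a
    have h := hstar _ (Or.inr ⟨a, rfl⟩)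
    rw [hZ, ← hX, Submodule.finrank_prod_inf_graph_eq_iff] at h
    exact fun x hx => h hx
  obtain ⟨c, hc, hc2, hXc, hYc⟩ := exists_eq_eLine_of_trace_mul_eq_zero hθ hθ0 hX hY
    (fun x hx y hy => by simpa using hiso _ hx _ hy) hθX
  exact ⟨c, hc, hc2, by rw [hZ, hXc, hYc, eLineProd]⟩

theorem isAdmissible_eLineProd [FiniteDimensional K F]
    {θ : F} (hθ : traceAnnihilator K E = eLine K E θ) (hθ0 : θ ≠ 0) {c : F} (hc : c ≠ 0)
    (hc2 : ∃ e : E, c * c = algebraMap E F e) :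
    IsAdmissible K E θ (eLineProd K E θ c) := by
  obtain ⟨e₀, he₀⟩ := hc2
  have hcθ : c * θ ≠ 0 := mul_ne_zero hc hθ0
  refine ⟨?_, ?_, ?_⟩
  · rw [eLineProd, Submodule.finrank_prod, finrank_eLine hc, finrank_eLine hcθ, two_mul]
  · have htr : ∀ a b : E,
        Algebra.trace K F (algebraMap E F a * c * (algebraMap E F b * (c * θ))) = 0 := by
      intro a b
      have h : algebraMap E F (a * b * e₀) * θ ∈ traceAnnihilator K E :=
        hθ ▸ mem_eLine.2 ⟨_, rfl⟩
      rw [show algebraMap E F a * c * (algebraMap E F b * (c * θ)) =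
          algebraMap E F (a * b * e₀) * θ * algebraMap E F 1 by
        rw [map_mul, map_mul, ← he₀, map_one]; ring]
      exact mem_traceAnnihilator.1 h 1
    rintro ⟨x, y⟩ ⟨hx, hy⟩ ⟨x', y'⟩ ⟨hx', hy'⟩
    obtain ⟨a, rfl⟩ := mem_eLine.1 hx
    obtain ⟨b, rfl⟩ := mem_eLine.1 hy
    obtain ⟨a', rfl⟩ := mem_eLine.1 hx'
    obtain ⟨b', rfl⟩ := mem_eLine.1 hy'
    rw [htr, htr, sub_zero]
  · rintro W (rfl | ⟨a, rfl⟩)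
    · rw [LinearMap.ker_fst, Submodule.finrank_inf_range LinearMap.inr_injective, eLineProd,
        Submodule.prod_comap_inr, finrank_eLine hcθ]
    · refine (Submodule.finrank_prod_inf_graph_eq_iff.2 fun x hx => ?_).trans (finrank_eLine hc)
      obtain ⟨d, rfl⟩ := mem_eLine.1 hx
      exact mem_eLine.2 ⟨a * d, by simp only [map_mul, LinearMap.mulLeft_apply]; ring⟩

theorem eLineProd_eq_eLineProd_iff {θ c c' : F} :
    eLineProd K E θ c = eLineProd K E θ c' ↔ eLine K E c = eLine K E c' := by
  refine ⟨fun h => by simpa [eLineProd] using congrArg (Submodule.comap (LinearMap.inl K F F)) h,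
    fun h => ?_⟩
  rw [eLineProd, eLineProd, eLine_mul, eLine_mul, h]

theorem eLineProd_inf_eq_bot {θ : F} (hθ0 : θ ≠ 0) {c c' : F}
    (h : eLineProd K E θ c ≠ eLineProd K E θ c') :
    eLineProd K E θ c ⊓ eLineProd K E θ c' = ⊥ := by
  have hline : eLine K E c ≠ eLine K E c' := mt eLineProd_eq_eLineProd_iff.2 h
  have hlineθ : eLine K E (c * θ) ≠ eLine K E (c' * θ) := by
    rw [eLine_mul, eLine_mul]
    exact fun h' => hline (Submodule.map_injective_of_injective
      (f := LinearMap.mulRight K θ) (mul_left_injective₀ hθ0) h')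
  rw [eLineProd, eLineProd, Submodule.prod_inf_prod, eLine_inf_eq_bot hline,
    eLine_inf_eq_bot hlineθ, Submodule.prod_bot]

theorem setOf_isAdmissible_eq_image [FiniteDimensional K E] [FiniteDimensional K F]
    {θ : F} (hθ : traceAnnihilator K E = eLine K E θ) (hθ0 : θ ≠ 0) :
    {Z | IsAdmissible K E θ Z} =
      eLineProd K E θ '' {c | c ≠ 0 ∧ ∃ e : E, c * c = algebraMap E F e} := by
  ext Z
  constructor
  · intro hZ
    obtain ⟨c, hc, hc2, rfl⟩ := hZ.exists_eq_eLineProd hθ hθ0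
    exact ⟨c, ⟨hc, hc2⟩, rfl⟩
  · rintro ⟨c, ⟨hc, hc2⟩, rfl⟩
    exact isAdmissible_eLineProd hθ hθ0 hc hc2

theorem setOf_isAdmissible_eq_singleton [Fintype E] [FiniteDimensional K E]
    [FiniteDimensional K F]
    {θ : F} (hθ : traceAnnihilator K E = eLine K E θ) (hθ0 : θ ≠ 0) (hE : ringChar E = 2) :
    {Z | IsAdmissible K E θ Z} = {eLineProd K E θ 1} := by
  rw [setOf_isAdmissible_eq_image hθ hθ0]
  refine Set.eq_singleton_iff_unique_mem.2 ⟨⟨1, ⟨one_ne_zero, 1, by simp⟩, rfl⟩, ?_⟩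
  rintro _ ⟨c, ⟨hc, e, he⟩, rfl⟩
  obtain ⟨d, rfl⟩ := FiniteField.isSquare_of_char_two hE e
  refine eLineProd_eq_eLineProd_iff.2 (eLine_eq_of_mem hc (mem_eLine_of_mul_self_eq (d := d) ?_))
  rw [he, map_mul, mul_one]

theorem exists_setOf_isAdmissible_eq_pair [Fintype E] [Fintype F] [FiniteDimensional K E]
    [FiniteDimensional K F]
    {θ : F} (hθ : traceAnnihilator K E = eLine K E θ) (hθ0 : θ ≠ 0) (hE : ringChar E ≠ 2)
    (hcard : Fintype.card F = Fintype.card E ^ 2) :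
    ∃ w : F, eLineProd K E θ 1 ≠ eLineProd K E θ w ∧
      {Z | IsAdmissible K E θ Z} = {eLineProd K E θ 1, eLineProd K E θ w} := by
  obtain ⟨u, hu⟩ := FiniteField.exists_nonsquare hE
  obtain ⟨w, hw⟩ := FiniteField.isSquare_algebraMap_of_card_eq_sq
    (Algebra.ringChar_eq E F ▸ hE) hcard u
  have hu0 : u ≠ 0 := by rintro rfl; exact hu IsSquare.zero
  have hw0 : w ≠ 0 := by rintro rfl; exact hu0 (by simpa using hw)
  have hline : ∀ c ≠ 0, (∃ e : E, c * c = algebraMap E F e) →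
      eLine K E c = eLine K E 1 ∨ eLine K E c = eLine K E w := by
    rintro c hc ⟨e, he⟩
    by_cases hsq : IsSquare e
    · obtain ⟨d, rfl⟩ := hsq
      exact .inl (eLine_eq_of_mem hc (mem_eLine_of_mul_self_eq (d := d)
        (by rw [he, map_mul, mul_one])))
    · obtain ⟨d, hd⟩ := FiniteField.isSquare_mul_of_not_isSquare hsq hu
      have he' : e = d * u⁻¹ * (d * u⁻¹) * u := by
        field_simp
        linear_combination hd
      refine .inr (eLine_eq_of_mem hc (mem_eLine_of_mul_self_eq (d := d * u⁻¹) ?_))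
      rw [he, he', map_mul, hw, map_mul]
      ring
  have hne : eLine K E (1 : F) ≠ eLine K E w := by
    intro h
    obtain ⟨d, hd⟩ := mem_eLine.1 (h ▸ self_mem_eLine w : w ∈ eLine K E (1 : F))
    rw [mul_one] at hd
    exact hu ⟨d, (algebraMap E F).injective (by rw [hw, map_mul, hd])⟩
  refine ⟨w, mt eLineProd_eq_eLineProd_iff.1 hne, ?_⟩
  rw [setOf_isAdmissible_eq_image hθ hθ0]
  ext Z
  constructor
  · rintro ⟨c, ⟨hc, hc2⟩, rfl⟩
    simpa only [Set.mem_insert_iff, Set.mem_singleton_iff, eLineProd_eq_eLineProd_iff]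
      using hline c hc hc2
  · rintro (rfl | rfl)
    · exact ⟨1, ⟨one_ne_zero, 1, by simp⟩, rfl⟩
    · exact ⟨w, ⟨hw0, u, hw.symm⟩, rfl⟩

theorem ncard_setOf_isAdmissible [Fintype E] [Fintype F] [FiniteDimensional K E]
    [FiniteDimensional K F]
    {θ : F} (hθ : traceAnnihilator K E = eLine K E θ) (hθ0 : θ ≠ 0)
    (hcard : Fintype.card F = Fintype.card E ^ 2) :
    {Z | IsAdmissible K E θ Z}.ncard = if ringChar E = 2 then 1 else 2 := by
  split_ifs with hE
  · rw [setOf_isAdmissible_eq_singleton hθ hθ0 hE, Set.ncard_singleton]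
  · obtain ⟨w, hne, heq⟩ := exists_setOf_isAdmissible_eq_pair hθ hθ0 hE hcard
    rw [heq, Set.ncard_pair hne]

theorem IsAdmissible.inf_eq_bot [FiniteDimensional K E] [FiniteDimensional K F]
    {θ : F} (hθ : traceAnnihilator K E = eLine K E θ) (hθ0 : θ ≠ 0) {Z₁ Z₂ : Submodule K (F × F)}
    (h₁ : IsAdmissible K E θ Z₁) (h₂ : IsAdmissible K E θ Z₂) (hne : Z₁ ≠ Z₂) :
    Z₁ ⊓ Z₂ = ⊥ := by
  obtain ⟨c₁, -, -, rfl⟩ := h₁.exists_eq_eLineProd hθ hθ0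
  obtain ⟨c₂, -, -, rfl⟩ := h₂.exists_eq_eLineProd hθ hθ0
  exact eLineProd_inf_eq_bot hθ0 hne

end

theorem stmt_2_general (q m : ℕ)
    (K E F : Type) [Field K] [Field E] [Field F]
    [Algebra K E] [Algebra E F] [Algebra K F] [IsScalarTower K E F]
    [Fintype K] [Fintype E] [Fintype F]
    (hK : Fintype.card K = q) (hE : Fintype.card E = q ^ m)
    (hF : Fintype.card F = q ^ (2 * m))
    (θ : F)
    (hθ : {x : F | ∀ e : E, Algebra.trace K F (x * algebraMap E F e) = 0} =
          {y : F | ∃ e : E, y = θ * algebraMap E F e})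
    (f : F × F → F × F → K)
    (hf : ∀ u v : F × F,
      f u v = Algebra.trace K F (u.1 * v.2) - Algebra.trace K F (v.1 * u.2))
    (Sstar : Set (Submodule K (F × F)))
    (hSstar : Sstar = {LinearMap.ker (LinearMap.fst K F F)} ∪
        {W | ∃ a : E,
          W = LinearMap.graph (LinearMap.mulLeft K (algebraMap E F a * θ))}) :
    {Z : Submodule K (F × F) |
        Module.finrank K Z = 2 * m ∧
        (∀ u ∈ Z, ∀ v ∈ Z, f u v = 0) ∧
        ∀ W ∈ Sstar, Module.finrank K ↥(Z ⊓ W) = m}.ncard = Nat.gcd 2 (q - 1) ∧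
      ∀ Z₁ Z₂ : Submodule K (F × F),
        (Module.finrank K Z₁ = 2 * m ∧ (∀ u ∈ Z₁, ∀ v ∈ Z₁, f u v = 0) ∧
          ∀ W ∈ Sstar, Module.finrank K ↥(Z₁ ⊓ W) = m) →
        (Module.finrank K Z₂ = 2 * m ∧ (∀ u ∈ Z₂, ∀ v ∈ Z₂, f u v = 0) ∧
          ∀ W ∈ Sstar, Module.finrank K ↥(Z₂ ⊓ W) = m) →
        Z₁ ≠ Z₂ → Z₁ ⊓ Z₂ = ⊥ := by
  have hq : 2 ≤ q := hK ▸ Fintype.one_lt_card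
  have hm : finrank K E = m :=
    Nat.pow_right_injective hq (show q ^ finrank K E = q ^ m by
      rw [← hE, ← hK, Module.card_eq_pow_finrank (K := K) (V := E)])
  have hEF : finrank E F = 2 := by
    have h : q ^ (m * finrank E F) = q ^ (m * 2) := by
      rw [pow_mul, ← hE, ← Module.card_eq_pow_finrank (K := E) (V := F), hF, mul_comm]
    exact Nat.eq_of_mul_eq_mul_left (hm ▸ Module.finrank_pos) (Nat.pow_right_injective hq h)
  have hθ' : traceAnnihilator K E = eLine K E θ := by
    ext x
    rw [mem_traceAnnihilator, mem_eLine]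
    simpa [mul_comm, eq_comm] using Set.ext_iff.1 hθ x
  have hθ0 : θ ≠ 0 := by
    rintro rfl
    refine traceAnnihilator_ne_bot ?_ (hθ'.trans eLine_zero)
    rw [← Module.finrank_mul_finrank K E F, hEF]
    linarith [Module.finrank_pos (R := K) (M := E)]
  obtain rfl : f = fun u v => Algebra.trace K F (u.1 * v.2) - Algebra.trace K F (v.1 * u.2) :=
    funext₂ hf
  subst hSstar hm
  refine ⟨?_, fun Z₁ Z₂ => IsAdmissible.inf_eq_bot hθ' hθ0⟩
  rw [← hK, FiniteField.gcd_two_card_sub_one, Algebra.ringChar_eq K E]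
  exact ncard_setOf_isAdmissible hθ' hθ0
    (by rw [Module.card_eq_pow_finrank (K := E) (V := F), hEF])

/-- In `V = F²` over `K = F_q` (with `F = F_{q^{2m}}`, `E = F_{q^m}`,
trace `T : F → K`, and `θ` with `{x : T(xE) = 0} = θE`), equipped with the
alternating form `f((x,y),(x',y')) = T(xy') − T(x'y)`, the number of totally
isotropic `2m`-dimensional `K`-subspaces meeting each member of
`Σ_⋆ = {[x=0]} ∪ {[y = aθx] : a ∈ E}` in an `m`-dimensional subspace is exactly
`gcd(2, q−1)`, and two such subspaces intersect in `0`. -/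
theorem stmt_2 (q m : ℕ) (hq : IsPrimePow q) (hm : 1 ≤ m)
    (K E F : Type) [Field K] [Field E] [Field F]
    [Algebra K E] [Algebra E F] [Algebra K F] [IsScalarTower K E F]
    [Fintype K] [Fintype E] [Fintype F]
    (hK : Fintype.card K = q) (hE : Fintype.card E = q ^ m)
    (hF : Fintype.card F = q ^ (2 * m))
    (θ : F)
    (hθ : {x : F | ∀ e : E, Algebra.trace K F (x * algebraMap E F e) = 0} =
          {y : F | ∃ e : E, y = θ * algebraMap E F e})
    (f : F × F → F × F → K)
    (hf : ∀ u v : F × F,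
      f u v = Algebra.trace K F (u.1 * v.2) - Algebra.trace K F (v.1 * u.2))
    (Sstar : Set (Submodule K (F × F)))
    (hSstar : Sstar = {LinearMap.ker (LinearMap.fst K F F)} ∪
        {W | ∃ a : E,
          W = LinearMap.graph (LinearMap.mulLeft K (algebraMap E F a * θ))}) :
    {Z : Submodule K (F × F) |
        Module.finrank K Z = 2 * m ∧
        (∀ u ∈ Z, ∀ v ∈ Z, f u v = 0) ∧
        ∀ W ∈ Sstar, Module.finrank K ↥(Z ⊓ W) = m}.ncard = Nat.gcd 2 (q - 1) ∧
      ∀ Z₁ Z₂ : Submodule K (F × F),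
        (Module.finrank K Z₁ = 2 * m ∧ (∀ u ∈ Z₁, ∀ v ∈ Z₁, f u v = 0) ∧
          ∀ W ∈ Sstar, Module.finrank K ↥(Z₁ ⊓ W) = m) →
        (Module.finrank K Z₂ = 2 * m ∧ (∀ u ∈ Z₂, ∀ v ∈ Z₂, f u v = 0) ∧
          ∀ W ∈ Sstar, Module.finrank K ↥(Z₂ ⊓ W) = m) →
        Z₁ ≠ Z₂ → Z₁ ⊓ Z₂ = ⊥ :=
  stmt_2_general q m K E F hK hE hF θ hθ f hf Sstar hSstar
end

section
/- Let q be an even prime power, k ≥ 1, E = F_q ⊆ F = F_{q^k}, and let V be an F-vector space equipped with a quadratic form Q : V → F. If X is an E-subspace of V with |X| > q^{k² + k}, then X contains a nonzero vector v with Q(v) = 0. -/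
/-!
Choose an `E`-basis `c₁, …, c_k` of `F`. Then `Q v = 0` exactly when the `k` quadratic forms
over `E` sending `v` to the `j`-th coordinate of `Q v` all vanish at `v`. In coordinates on `X`
these are `k` polynomials of degree at most `2` in `dim_E X > k² + k ≥ 2k` variables, so by
Chevalley–Warning the number of common zeros is divisible by the characteristic of `E`; as `0`
is one of them, there is another.
-/

open MvPolynomial Module

namespace QuadraticMap

variable {K M ι : Type*} [CommRing K] [AddCommGroup M] [Module K M] [Fintype ι] [LinearOrder ι]

/-- The triangular bilinear form `toBilin` represents `Q` in every characteristic, unlike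
`associated`. -/
noncomputable def toMvPolynomial (Q : QuadraticForm K M) (b : Basis ι K M) : MvPolynomial ι K :=
  ∑ i, ∑ j, C (Q.toBilin b (b i) (b j)) * X i * X j

theorem eval_toMvPolynomial (Q : QuadraticForm K M) (b : Basis ι K M) (x : ι → K) :
    eval x (Q.toMvPolynomial b) = Q (b.equivFun.symm x) := by
  conv_rhs => rw [← Q.toQuadraticMap_toBilin b]
  simp only [toMvPolynomial, Basis.equivFun_symm_apply, LinearMap.BilinMap.toQuadraticMap_apply,
    map_sum, map_smul, LinearMap.sum_apply, LinearMap.smul_apply, smul_eq_mul, map_mul, eval_C,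
    eval_X, Finset.mul_sum]
  rw [Finset.sum_comm]
  exact Fintype.sum_congr _ _ fun i => Fintype.sum_congr _ _ fun j => by ring

theorem totalDegree_toMvPolynomial_le (Q : QuadraticForm K M) (b : Basis ι K M) :
    (Q.toMvPolynomial b).totalDegree ≤ 2 := by
  refine (totalDegree_finsetSum _ _).trans (Finset.sup_le fun i _ => ?_)
  refine (totalDegree_finsetSum _ _).trans (Finset.sup_le fun j _ => ?_)
  rw [X, X, C_mul_monomial, monomial_mul]
  refine (totalDegree_monomial_le _ _).trans_eq ?_
  rw [Finsupp.sum_add_index' (fun _ => rfl) fun _ _ _ => rfl]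
  simp

end QuadraticMap

namespace QuadraticForm

theorem exists_ne_zero_forall_eq_zero_of_two_mul_card_lt_finrank {K M ι : Type*} [Field K]
    [Fintype K] [AddCommGroup M] [Module K M] [Fintype ι] (Q : ι → QuadraticForm K M)
    (h : 2 * Fintype.card ι < finrank K M) : ∃ v ≠ 0, ∀ i, Q i v = 0 := by
  classical
  have : Module.Finite K M := Module.finite_of_finrank_pos (by omega)
  let b := Module.finBasis K M
  have hdeg : ∑ i, ((Q i).toMvPolynomial b).totalDegree < Fintype.card (Fin (finrank K M)) :=
    calc ∑ i, ((Q i).toMvPolynomial b).totalDegree ≤ ∑ _i : ι, 2 :=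
          Finset.sum_le_sum fun i _ => (Q i).totalDegree_toMvPolynomial_le b
      _ < _ := by simpa [mul_comm] using h
  obtain ⟨p, hp⟩ := CharP.exists K
  have hdvd := char_dvd_card_solutions_of_fintype_sum_lt p hdeg
  let zero : { x // ∀ i, eval x ((Q i).toMvPolynomial b) = 0 } :=
    ⟨0, fun i => by rw [QuadraticMap.eval_toMvPolynomial, map_zero, QuadraticMap.map_zero]⟩
  have hcard : 1 < Fintype.card { x // ∀ i, eval x ((Q i).toMvPolynomial b) = 0 } :=
    (CharP.char_is_prime K p).one_lt.trans_le
      (Nat.le_of_dvd (Fintype.card_pos_iff.2 ⟨zero⟩) hdvd)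
  obtain ⟨⟨x, hx⟩, hx0⟩ := Fintype.exists_ne_of_one_lt_card hcard zero
  refine ⟨b.equivFun.symm x, ?_, fun i => ?_⟩
  · exact b.equivFun.symm.map_ne_zero_iff.2 fun h => hx0 (Subtype.ext h)
  · rw [← QuadraticMap.eval_toMvPolynomial]; exact hx i

theorem exists_mem_ne_zero_eq_zero_of_two_mul_finrank_lt {E F V : Type*} [Field E] [Fintype E]
    [Field F] [Algebra E F] [Module.Finite E F] [AddCommGroup V] [Module F V] [Module E V]
    [IsScalarTower E F V] (Q : QuadraticForm F V) (X : Submodule E V)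
    (h : 2 * finrank E F < finrank E X) : ∃ v ∈ X, v ≠ 0 ∧ Q v = 0 := by
  let c := Module.finBasis E F
  let Qc : Fin (finrank E F) → QuadraticForm E X := fun j =>
    ((c.coord j).compQuadraticMap' Q).comp X.subtype
  obtain ⟨v, hv0, hv⟩ :=
    exists_ne_zero_forall_eq_zero_of_two_mul_card_lt_finrank Qc (by simpa using h)
  exact ⟨v, v.2, by simpa using hv0, c.forall_coord_eq_zero_iff.1 hv⟩

end QuadraticForm

theorem stmt_4_general (q k : ℕ)
    (E F : Type) [Field E] [Field F] [Algebra E F]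
    [Fintype E] [Fintype F]
    (hE : Fintype.card E = q) (hF : Fintype.card F = q ^ k)
    (V : Type) [AddCommGroup V] [Module F V] [Module E V] [IsScalarTower E F V]
    (Q : QuadraticForm F V)
    (X : Submodule E V) (hX : Nat.card X > q ^ (k ^ 2 + k)) :
    ∃ v ∈ X, v ≠ 0 ∧ Q v = 0 := by
  have hq : 1 < q := hE ▸ Fintype.one_lt_card
  have hfinrankF : finrank E F = k := by
    have hcardF := Module.card_eq_pow_finrank (K := E) (V := F)
    rw [hF, hE] at hcardF
    exact Nat.pow_right_injective hq hcardF.symm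
  have : Finite X := Nat.finite_of_card_ne_zero (by omega)
  have hfinrankX : k ^ 2 + k < finrank E X := by
    rwa [Module.natCard_eq_pow_finrank (K := E), Nat.card_eq_fintype_card, hE,
      gt_iff_lt, Nat.pow_lt_pow_iff_right hq] at hX
  refine QuadraticForm.exists_mem_ne_zero_eq_zero_of_two_mul_finrank_lt Q X ?_
  have : k ≤ k ^ 2 := Nat.le_self_pow two_ne_zero k
  omega

/-- Let `q` be even, `E = F_q ⊆ F = F_{q^k}`, and `V` an `F`-vector
space with a quadratic form `Q : V → F`.  Any `E`-subspace `X` of `V` with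
`|X| > q^{k²+k}` contains a nonzero vector `v` with `Q v = 0`. -/
theorem stmt_4 (q k : ℕ) (hq : IsPrimePow q) (hqe : Even q) (hk : 1 ≤ k)
    (E F : Type) [Field E] [Field F] [Algebra E F]
    [Fintype E] [Fintype F]
    (hE : Fintype.card E = q) (hF : Fintype.card F = q ^ k)
    (V : Type) [AddCommGroup V] [Module F V] [Module E V] [IsScalarTower E F V]
    (Q : QuadraticForm F V)
    (X : Submodule E V) (hX : Nat.card X > q ^ (k ^ 2 + k)) :
    ∃ v ∈ X, v ≠ 0 ∧ Q v = 0 :=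
  stmt_4_general q k E F hE hF V Q X hX
end

section
/- Let q be even and let V be an F_{q^k}-vector space of dimension 4m with a nondegenerate hyperbolic quadratic form Q over F_{q^k}, where m > (k+1)/2. Let T : F_{q^k} → F_q be the trace and set Q'(v) = T(Q(v)), making V an F_q-orthogonal space of dimension 4mk. If Σ is an orthogonal spread of (V, Q) over F_{q^k}, then Σ is a maximal partial spread of the F_q-space V of dimension 4mk: every F_q-subspace of dimension 2mk meets some member of Σ nontrivially. -/
/-!
The `E`-coordinates of `Q` with respect to an `E`-basis of `F` are `finrank E F = k` quadratic
forms over `E`. On an `E`-subspace `X` of dimension `2mk > 2k` they are `k` polynomials of degree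
at most `2` in more than `2k` variables, so by Chevalley–Warning they have a common nonzero zero:
a nonzero `Q`-singular vector of `X`, which lies in some member of the spread.
-/

open MvPolynomial Module

theorem QuadraticMap.exists_mvPolynomial_eval_eq {K V σ : Type*} [Field K] [AddCommGroup V]
    [Module K V] [Fintype σ] (Q : QuadraticForm K V) (b : Basis σ K V) :
    ∃ P : MvPolynomial σ K, P.totalDegree ≤ 2 ∧ ∀ c, eval c P = Q (∑ i, c i • b i) := by
  have := Module.Free.of_basis b
  obtain ⟨B, rfl⟩ := LinearMap.BilinMap.toQuadraticMap_surjective Q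
  refine ⟨∑ i, ∑ j, C (B (b i) (b j)) * X i * X j, ?_, fun c => ?_⟩
  · refine (totalDegree_finsetSum _ _).trans <| Finset.sup_le fun i _ =>
      (totalDegree_finsetSum _ _).trans <| Finset.sup_le fun j _ => ?_
    grw [totalDegree_mul, totalDegree_mul, totalDegree_C, totalDegree_X, totalDegree_X]
  · simp only [map_sum, map_mul, eval_C, eval_X, LinearMap.BilinMap.toQuadraticMap_apply,
      map_smul, LinearMap.sum_apply, LinearMap.smul_apply, smul_eq_mul, Finset.mul_sum]
    rw [Finset.sum_comm]
    exact Finset.sum_congr rfl fun _ _ => Finset.sum_congr rfl fun _ _ => by ring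

theorem QuadraticMap.exists_ne_zero_forall_eq_zero_of_two_mul_card_lt_finrank
    {K V ι : Type*} [Field K] [Fintype K] [AddCommGroup V] [Module K V] [Fintype ι]
    (Q : ι → QuadraticForm K V) (h : 2 * Fintype.card ι < finrank K V) :
    ∃ v ≠ 0, ∀ j, Q j v = 0 := by
  classical
  have : Module.Finite K V := Module.finite_of_finrank_pos (by omega)
  let b := Module.finBasis K V
  choose P hdeg heval using fun j => (Q j).exists_mvPolynomial_eval_eq b
  let p := ringChar K
  have hsum : ∑ j, (P j).totalDegree < Fintype.card (Fin (finrank K V)) := by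
    calc ∑ j, (P j).totalDegree ≤ ∑ _j : ι, 2 := Finset.sum_le_sum fun j _ => hdeg j
      _ < _ := by simpa [mul_comm] using h
  have hdvd := char_dvd_card_solutions_of_fintype_sum_lt p hsum
  let zero : { c // ∀ j, eval c (P j) = 0 } := ⟨0, fun j => by rw [heval]; simp⟩
  -- The zero solution is counted, so the number of solutions is a positive multiple of `p`.
  have hcard : 1 < Fintype.card { c // ∀ j, eval c (P j) = 0 } :=
    (CharP.char_is_prime K p).one_lt.trans_le
      (Nat.le_of_dvd (Fintype.card_pos_iff.2 ⟨zero⟩) hdvd)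
  obtain ⟨⟨c, hc⟩, hne⟩ := Fintype.exists_ne_of_one_lt_card hcard zero
  refine ⟨b.equivFun.symm c, ?_, fun j => ?_⟩
  · exact b.equivFun.symm.map_ne_zero_iff.2 fun h => hne (Subtype.ext h)
  · rw [Basis.equivFun_symm_apply, ← heval, hc]

theorem QuadraticMap.exists_ne_zero_mem_eq_zero_of_two_mul_finrank_lt {E F V : Type*} [Field E]
    [Fintype E] [CommRing F] [Algebra E F] [Module.Finite E F] [AddCommGroup V] [Module F V]
    [Module E V] [IsScalarTower E F V] (Q : QuadraticForm F V) (X : Submodule E V)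
    (h : 2 * finrank E F < finrank E X) : ∃ v ∈ X, v ≠ 0 ∧ Q v = 0 := by
  let bF := Module.finBasis E F
  obtain ⟨u, hu, hQu⟩ := exists_ne_zero_forall_eq_zero_of_two_mul_card_lt_finrank
    (fun j => ((bF.coord j).compQuadraticMap' Q).comp X.subtype) (by simpa using h)
  exact ⟨u, u.2, by simpa using hu, bF.forall_coord_eq_zero_iff.1 hQu⟩

theorem stmt_6_general (q k m : ℕ) (hk : 1 ≤ k)
    (hm : k + 1 < 2 * m)
    (E F : Type) [Field E] [Field F] [Algebra E F] [Fintype E] [Fintype F]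
    (hE : Fintype.card E = q) (hF : Fintype.card F = q ^ k)
    (V : Type) [AddCommGroup V] [Module F V] [Module E V] [IsScalarTower E F V]
    (Q : QuadraticForm F V)
    (S : Set (Submodule F V))
    (hcover : ∀ v : V, v ≠ 0 → Q v = 0 → ∃ X ∈ S, v ∈ X) :
    ∀ X : Submodule E V, Module.finrank E X = 2 * m * k →
      ∃ Y ∈ S, Y.restrictScalars E ⊓ X ≠ ⊥ := by
  intro X hX
  have hEF : finrank E F = k := by
    have hcard : q ^ finrank E F = q ^ k := by rw [← hE, ← card_eq_pow_finrank, hF, hE]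
    exact Nat.pow_right_injective (hE ▸ Fintype.one_lt_card) hcard
  have hlt : 2 * finrank E F < finrank E X := by
    rw [hEF, hX]
    nlinarith
  obtain ⟨v, hvX, hv0, hQv⟩ := Q.exists_ne_zero_mem_eq_zero_of_two_mul_finrank_lt X hlt
  obtain ⟨Y, hYS, hvY⟩ := hcover v hv0 hQv
  exact ⟨Y, hYS, Submodule.ne_bot_iff _ |>.2 ⟨v, ⟨hvY, hvX⟩, hv0⟩⟩

/-- Let `q` be even, `V` an `F_{q^k}`-space of dimension `4m` with
a nondegenerate hyperbolic quadratic form `Q`, where `m > (k+1)/2`.  Any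
orthogonal spread `Σ` of `(V, Q)` is a maximal partial spread of the `F_q`-space
`V` of dimension `4mk`: every `F_q`-subspace of dimension `2mk` meets some
member of `Σ` nontrivially. -/
theorem stmt_6 (q k m : ℕ) (hq : IsPrimePow q) (hqe : Even q) (hk : 1 ≤ k)
    (hm : k + 1 < 2 * m)
    (E F : Type) [Field E] [Field F] [Algebra E F] [Fintype E] [Fintype F]
    (hE : Fintype.card E = q) (hF : Fintype.card F = q ^ k)
    (V : Type) [AddCommGroup V] [Module F V] [Module E V] [IsScalarTower E F V]
    (hdim : Module.finrank F V = 4 * m)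
    (Q : QuadraticForm F V)
    -- nondegenerate (the polar form is nondegenerate):
    (hnd : ∀ v : V, (∀ w : V, QuadraticMap.polar Q v w = 0) → v = 0)
    -- hyperbolic (plus type): there is a totally singular `2m`-subspace
    (hhyp : ∃ W : Submodule F V, Module.finrank F W = 2 * m ∧ ∀ v ∈ W, Q v = 0)
    (S : Set (Submodule F V))
    (hts : ∀ X ∈ S, Module.finrank F X = 2 * m ∧ ∀ v ∈ X, Q v = 0)
    (hdisj : ∀ X ∈ S, ∀ Y ∈ S, X ≠ Y → X ⊓ Y = ⊥)
    (hcover : ∀ v : V, v ≠ 0 → Q v = 0 → ∃ X ∈ S, v ∈ X) :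
    ∀ X : Submodule E V, Module.finrank E X = 2 * m * k →
      ∃ Y ∈ S, Y.restrictScalars E ⊓ X ≠ ⊥ :=
  stmt_6_general q k m hk hm E F hE hF V Q S hcover
end

section
/- Let q be even and let V be a hyperbolic orthogonal F_q-space of dimension 4m with m ≥ 2. If Σ is a maximal orthogonal partial spread of V (a maximal set of totally singular 2m-spaces pairwise intersecting in 0), then Σ is also a maximal symplectic partial spread of V with respect to the alternating form associated to the quadratic form. -/
/-!
Suppose a totally isotropic `2m`-space `Y` meets every member of `Σ` trivially. By maximality
of `Σ`, `Y` is not totally singular. On `Y` the form `Q` is additive and `Q (c • v) = c² Q v`;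
since every element of `F_q` (`q` even) is a square, the singular vectors of `Y` form a
hyperplane `Y₀`. A member of `Σ` meets the `(2m+1)`-space `Y₀ᗮ` in a singular vector `x ∉ Y`,
and for a nonsingular `y ∈ Y` the plane `⟨x, y⟩` contains a second singular point `x'`, so
`Z₁ = Y₀ + ⟨x⟩` and `Z₂ = Y₀ + ⟨x'⟩` are totally singular `2m`-spaces with `Z₁ ∩ Z₂ = Y₀`.
Neither lies in `Σ`, so members `X₁, X₂` of `Σ` meet them, necessarily in points.

For totally singular `h`-spaces `A, C, D` of a `2h`-space with nondegenerate polar form,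
`dim (A ∩ C) + dim (C ∩ D) + dim (A ∩ D) + h` is even: it has the parity of the rank of the
alternating form `((c, d), (c', d')) ↦ f (c, d')` on `{(c, d) ∈ C × D | c + d ∈ A}`. Applied to
the triangles `X₁ Z₁ Z₂`, `X₂ Z₁ Z₂` and `X₁ Z₁ X₂` (with `h = 2m` even) it shows `X₁ ≠ X₂`
and `X₁ ∩ X₂ ≠ 0`, contradicting that `Σ` is a partial spread.
-/

open Module LinearMap.BilinForm QuadraticMap

section LinearAlgebra

variable {K V : Type*} [Field K] [AddCommGroup V] [Module K V]

theorem LinearMap.finrank_comap_of_le_range {N : Type*} [AddCommGroup N] [Module K N]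
    [FiniteDimensional K V] (f : V →ₗ[K] N) {p : Submodule K N} (hp : p ≤ LinearMap.range f) :
    finrank K (p.comap f) = finrank K p + finrank K (LinearMap.ker f) := by
  have := (f.domRestrict (p.comap f)).finrank_range_add_finrank_ker
  rwa [LinearMap.range_domRestrict, Submodule.map_comap_eq, inf_eq_right.mpr hp,
    LinearMap.ker_domRestrict,
    (Submodule.comapSubtypeEquivOfLe (LinearMap.ker_le_comap f)).finrank_eq, eq_comm] at this

theorem Submodule.sup_span_singleton_inf_sup_span_singleton {Y₀ : Submodule K V} {x x' : V}
    (hx' : x' ∉ Y₀ ⊔ K ∙ x) : (Y₀ ⊔ K ∙ x) ⊓ (Y₀ ⊔ K ∙ x') = Y₀ := by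
  have hcov : Y₀ ⋖ Y₀ ⊔ K ∙ x' := sup_comm (K ∙ x') Y₀ ▸
    Submodule.covBy_span_singleton_sup fun h => hx' (Submodule.mem_sup_left h)
  refine (hcov.eq_or_eq (le_inf le_sup_left le_sup_left) inf_le_right).resolve_right
    fun h => hx' ?_
  exact inf_eq_right.mp h (Submodule.mem_sup_right (Submodule.mem_span_singleton_self x'))

theorem Submodule.finrank_inf_eq_one [FiniteDimensional K V] {X Z H : Submodule K V}
    (hHZ : H ≤ Z) (hr : finrank K H + 1 = finrank K Z) (hXH : X ⊓ H = ⊥) (hXZ : X ⊓ Z ≠ ⊥) :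
    finrank K ↥(X ⊓ Z) = 1 := by
  have hdisj : X ⊓ Z ⊓ H = ⊥ := eq_bot_mono (inf_le_inf_right H inf_le_left) hXH
  have hsum := Submodule.finrank_sup_add_finrank_inf_eq (X ⊓ Z) H
  rw [hdisj, finrank_bot] at hsum
  have hle := Submodule.finrank_mono (sup_le inf_le_right hHZ : X ⊓ Z ⊔ H ≤ Z)
  have hpos : finrank K ↥(X ⊓ Z) ≠ 0 := fun h0 => hXZ (Submodule.finrank_eq_zero.mp h0)
  omega

end LinearAlgebra

namespace LinearMap.BilinForm

section Alternating

variable {K M : Type*} [Field K] [AddCommGroup M] [Module K M] {B : LinearMap.BilinForm K M}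

theorem IsAlt.eq_zero_of_apply_eq_zero (hB : B.IsAlt) {u v : M} (huv : B u v ≠ 0) {s t : K}
    (hu : B u (s • u + t • v) = 0) (hv : B v (s • u + t • v) = 0) : s = 0 ∧ t = 0 := by
  have hvu : B v u = -B u v := (hB.neg_eq u v).symm
  simp only [map_add, map_smul, hB.self_eq_zero, hvu, smul_eq_mul] at hu hv
  exact ⟨by simpa [huv] using hv, by simpa [huv] using hu⟩

theorem IsAlt.finrank_span_pair [FiniteDimensional K M] (hB : B.IsAlt) {u v : M}
    (huv : B u v ≠ 0) : finrank K ↥(K ∙ u ⊔ K ∙ v) = 2 := by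
  have hv : v ∉ K ∙ u := fun h => by
    obtain ⟨s, rfl⟩ := Submodule.mem_span_singleton.mp h
    simp [hB.self_eq_zero] at huv
  rw [Submodule.finrank_sup_span_singleton hv, finrank_span_singleton]
  rintro rfl
  simp at huv

theorem IsAlt.isCompl_span_pair_orthogonal [FiniteDimensional K M] (hB : B.IsAlt) {u v : M}
    (huv : B u v ≠ 0) : IsCompl (K ∙ u ⊔ K ∙ v) (B.orthogonal (K ∙ u ⊔ K ∙ v)) := by
  refine (isCompl_orthogonal_iff_disjoint hB.isRefl).mpr (Submodule.disjoint_def.mpr ?_)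
  intro w hwU hw
  obtain ⟨_, hsu, _, htv, rfl⟩ := Submodule.mem_sup.mp hwU
  obtain ⟨s, rfl⟩ := Submodule.mem_span_singleton.mp hsu
  obtain ⟨t, rfl⟩ := Submodule.mem_span_singleton.mp htv
  obtain ⟨rfl, rfl⟩ := hB.eq_zero_of_apply_eq_zero huv
    (hw u (Submodule.mem_sup_left (Submodule.mem_span_singleton_self u)))
    (hw v (Submodule.mem_sup_right (Submodule.mem_span_singleton_self v)))
  simp

theorem even_finrank_range_of_isAlt [FiniteDimensional K M] (hB : B.IsAlt) :
    Even (finrank K (LinearMap.range B)) := by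
  suffices key : ∀ n (M : Type _) [AddCommGroup M] [Module K M] [FiniteDimensional K M]
      (B : LinearMap.BilinForm K M), B.IsAlt → finrank K M = n →
      Even (finrank K M - finrank K (LinearMap.ker B)) by
    simpa [← B.finrank_range_add_finrank_ker] using key _ M B hB rfl
  intro n
  induction n using Nat.strong_induction_on with
  | _ n ih =>
  intro M _ _ _ B hB hn
  by_cases hB0 : B = 0
  · rw [hB0, LinearMap.ker_zero, finrank_top, Nat.sub_self]
    exact Even.zero
  obtain ⟨u, v, huv⟩ : ∃ u v, B u v ≠ 0 := by
    by_contra! h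
    exact hB0 (LinearMap.ext₂ h)
  -- split off the hyperbolic plane spanned by `u` and `v`
  have hcompl := hB.isCompl_span_pair_orthogonal huv
  set P := B.orthogonal (K ∙ u ⊔ K ∙ v)
  have hker : LinearMap.ker B ≤ P := fun z hz n _ =>
    hB.isRefl z n (by rw [LinearMap.mem_ker.mp hz, LinearMap.zero_apply])
  have hkerP : finrank K (LinearMap.ker (B.restrict P)) = finrank K (LinearMap.ker B) := by
    rw [ker_restrict_eq_of_codisjoint hcompl.symm.codisjoint
      fun x hx y hy => hB.isRefl y x (hx y hy)]
    exact (Submodule.comapSubtypeEquivOfLe hker).finrank_eq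
  have hP := Submodule.finrank_add_eq_of_isCompl hcompl
  rw [hB.finrank_span_pair huv] at hP
  have hkerle := Submodule.finrank_mono hker
  obtain ⟨k, hk⟩ := hkerP ▸ ih (finrank K P) (by omega) P (B.restrict P) (fun x => hB x) rfl
  exact ⟨k + 1, by omega⟩

end Alternating

variable {K V : Type*} [Field K] [AddCommGroup V] [Module K V] {B : LinearMap.BilinForm K V}

theorem orthogonal_sup (U W : Submodule K V) :
    B.orthogonal (U ⊔ W) = B.orthogonal U ⊓ B.orthogonal W := by
  ext x
  simp only [mem_orthogonal_iff, Submodule.mem_inf]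
  refine ⟨fun h => ⟨fun n hn => h n (Submodule.mem_sup_left hn),
    fun n hn => h n (Submodule.mem_sup_right hn)⟩, ?_⟩
  rintro ⟨hU, hW⟩ _ hn
  obtain ⟨u, hu, w, hw, rfl⟩ := Submodule.mem_sup.mp hn
  rw [map_add, LinearMap.add_apply, hU u hu, hW w hw, add_zero]

variable [FiniteDimensional K V]

theorem orthogonal_inf (hB : B.Nondegenerate) (hr : B.IsRefl) (U W : Submodule K V) :
    B.orthogonal (U ⊓ W) = B.orthogonal U ⊔ B.orthogonal W := by
  conv_lhs => rw [← orthogonal_orthogonal hB hr U, ← orthogonal_orthogonal hB hr W]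
  rw [← orthogonal_sup, orthogonal_orthogonal hB hr]

theorem orthogonal_eq_self (hB : B.Nondegenerate) {U : Submodule K V}
    (hU : U ≤ B.orthogonal U) (hV : finrank K V = 2 * finrank K U) : B.orthogonal U = U :=
  (Submodule.eq_of_le_of_finrank_le hU (by rw [finrank_orthogonal hB]; omega)).symm

end LinearMap.BilinForm

namespace QuadraticMap

variable {K V : Type*} [Field K] [AddCommGroup V] [Module K V] {Q : QuadraticForm K V}

theorem isRefl_polarBilin (Q : QuadraticForm K V) : (polarBilin Q).IsRefl := fun u v h => by
  rwa [polarBilin_apply_apply, polar_comm, ← polarBilin_apply_apply]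

theorem le_orthogonal_polarBilin {U : Submodule K V} (hU : ∀ v ∈ U, Q v = 0) :
    U ≤ orthogonal (polarBilin Q) U := fun v hv u hu => by
  rw [polarBilin_apply_apply, polar, hU u hu, hU v hv, hU _ (U.add_mem hu hv), sub_zero, sub_zero]

theorem map_sub_polar_div_smul_eq_zero {x y : V} (hx : Q x = 0) (hy : Q y ≠ 0) :
    Q (x - (polar Q x y / Q y) • y) = 0 := by
  rw [sub_eq_add_neg, QuadraticMap.map_add Q, Q.map_neg, polar_neg_right, Q.map_smul,
    polar_smul_right, hx, smul_eq_mul, smul_eq_mul]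
  field_simp
  ring

theorem exists_totallySingular_sup_span_singleton_eq (hsq : ∀ a : K, IsSquare a)
    {Y : Submodule K V} (hY : ∀ u ∈ Y, ∀ v ∈ Y, polar Q u v = 0) {y : V} (hyY : y ∈ Y)
    (hy : Q y ≠ 0) : ∃ Y₀ ≤ Y, (∀ v ∈ Y₀, Q v = 0) ∧ Y₀ ⊔ K ∙ y = Y := by
  have hQadd : ∀ u ∈ Y, ∀ v ∈ Y, Q (u + v) = Q u + Q v := fun u hu v hv => by
    rw [QuadraticMap.map_add Q, hY u hu v hv, add_zero]
  let Y₀ : Submodule K V :=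
    { carrier := {v | v ∈ Y ∧ Q v = 0}
      add_mem' := fun {u v} hu hv =>
        ⟨Y.add_mem hu.1 hv.1, by rw [hQadd u hu.1 v hv.1, hu.2, hv.2, add_zero]⟩
      zero_mem' := ⟨Y.zero_mem, Q.map_zero⟩
      smul_mem' := fun c v hv => ⟨Y.smul_mem c hv.1, by rw [Q.map_smul, hv.2, smul_zero]⟩ }
  refine ⟨Y₀, fun v hv => hv.1, fun v hv => hv.2,
    le_antisymm (sup_le (fun v hv => hv.1) ((Submodule.span_singleton_le_iff_mem _ _).mpr hyY))
      fun v hv => ?_⟩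
  obtain ⟨c, hc⟩ := hsq (-Q v / Q y)
  have hv₀ : v - c • y ∈ Y₀ := by
    refine ⟨Y.sub_mem hv (Y.smul_mem c hyY), ?_⟩
    rw [sub_eq_add_neg, hQadd _ hv _ (Y.neg_mem (Y.smul_mem c hyY)), Q.map_neg, Q.map_smul,
      smul_eq_mul, ← hc, div_mul_cancel₀ _ hy, add_neg_cancel]
  exact Submodule.mem_sup.mpr ⟨_, hv₀, c • y,
    Submodule.smul_mem _ _ (Submodule.mem_span_singleton_self y), sub_add_cancel v _⟩

theorem forall_map_sup_span_singleton_eq_zero {Y₀ : Submodule K V} (hY₀ : ∀ v ∈ Y₀, Q v = 0)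
    {x : V} (hx : x ∈ orthogonal (polarBilin Q) Y₀) (hxQ : Q x = 0) :
    ∀ v ∈ Y₀ ⊔ K ∙ x, Q v = 0 := by
  intro v hv
  obtain ⟨u, hu, _, hz, rfl⟩ := Submodule.mem_sup.mp hv
  obtain ⟨c, rfl⟩ := Submodule.mem_span_singleton.mp hz
  rw [QuadraticMap.map_add Q, hY₀ u hu, Q.map_smul, hxQ, polar_smul_right,
    show polar Q u x = 0 from hx u hu]
  simp

variable [FiniteDimensional K V]

theorem orthogonal_polarBilin_eq_self (hB : (polarBilin Q).Nondegenerate) {h : ℕ}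
    (hV : finrank K V = 2 * h) {A : Submodule K V} (hA : finrank K A = h ∧ ∀ v ∈ A, Q v = 0) :
    orthogonal (polarBilin Q) A = A :=
  orthogonal_eq_self hB (le_orthogonal_polarBilin hA.2) (hA.1 ▸ hV)

theorem polar_eq_zero_iff_mem_sup (hB : (polarBilin Q).Nondegenerate) {h : ℕ}
    (hV : finrank K V = 2 * h) {A C D : Submodule K V}
    (hA : finrank K A = h ∧ ∀ v ∈ A, Q v = 0) (hC : finrank K C = h ∧ ∀ v ∈ C, Q v = 0)
    (hD : finrank K D = h ∧ ∀ v ∈ D, Q v = 0) {c d : V} (hc : c ∈ C) (hd : d ∈ D)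
    (hcd : c + d ∈ A) :
    (∀ c' ∈ C, ∀ d' ∈ D, c' + d' ∈ A → polar Q c d' = 0) ↔ c + d ∈ A ⊓ C ⊔ A ⊓ D := by
  have hAA := le_orthogonal_polarBilin hA.2
  have hCC := le_orthogonal_polarBilin hC.2
  have hDD := le_orthogonal_polarBilin hD.2
  constructor
  · intro hzero
    have hcW : c ∈ orthogonal (polarBilin Q) (A ⊓ (C ⊔ D)) := by
      intro w hw
      obtain ⟨c', hc', d', hd', rfl⟩ := Submodule.mem_sup.mp hw.2
      exact (isRefl_polarBilin Q) _ _ <| by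
        rw [map_add, hCC hc' c hc, zero_add]
        exact hzero c' hc' d' hd' hw.1
    rw [orthogonal_inf hB (isRefl_polarBilin Q), orthogonal_sup,
      orthogonal_polarBilin_eq_self hB hV hA, orthogonal_polarBilin_eq_self hB hV hC,
      orthogonal_polarBilin_eq_self hB hV hD] at hcW
    obtain ⟨a, ha, e, he, rfl⟩ := Submodule.mem_sup.mp hcW
    have haC : a ∈ C := by simpa using C.sub_mem hc he.1
    have hdA : e + d ∈ A := by simpa [add_assoc] using A.sub_mem hcd ha
    rw [add_assoc]
    exact Submodule.add_mem_sup ⟨ha, haC⟩ ⟨hdA, D.add_mem he.2 hd⟩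
  · intro hR c' hc' d' hd' hcd'
    obtain ⟨a₁, ha₁, a₂, ha₂, hsum⟩ := Submodule.mem_sup.mp hR
    -- `c - a₁ = a₂ - d` lies in `C ⊓ D`, which is orthogonal to `D`
    have hcD : c - a₁ ∈ D := by
      rw [show c - a₁ = a₂ - d by rw [sub_eq_sub_iff_add_eq_add, ← hsum, add_comm]]
      exact D.sub_mem ha₂.2 hd
    have h₁ : polar Q (c - a₁) d' = 0 := hDD hd' _ hcD
    have h₂ : polar Q a₁ (c' + d') = 0 := hAA hcd' _ ha₁.1
    have h₃ : polar Q a₁ c' = 0 := hCC hc' _ ha₁.2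
    rw [polar_add_right, h₃, zero_add] at h₂
    rw [polar_sub_left, h₂, sub_zero] at h₁
    exact h₁

theorem even_finrank_inf_sup_sub (hB : (polarBilin Q).Nondegenerate) {h : ℕ}
    (hV : finrank K V = 2 * h) {A C D : Submodule K V}
    (hA : finrank K A = h ∧ ∀ v ∈ A, Q v = 0) (hC : finrank K C = h ∧ ∀ v ∈ C, Q v = 0)
    (hD : finrank K D = h ∧ ∀ v ∈ D, Q v = 0) :
    Even (finrank K ↥(A ⊓ (C ⊔ D)) - finrank K ↥(A ⊓ C ⊔ A ⊓ D)) := by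
  let f : C × D →ₗ[K] V := C.subtype.coprod D.subtype
  let β : LinearMap.BilinForm K (C × D) :=
    (polarBilin Q).compl₁₂ (C.subtype ∘ₗ LinearMap.fst K C D) (D.subtype ∘ₗ LinearMap.snd K C D)
  let T := A.comap f
  have hrange : LinearMap.range f = C ⊔ D := by
    simp only [f, LinearMap.range_coprod, Submodule.range_subtype]
  have halt : (β.restrict T).IsAlt := fun ⟨⟨c, d⟩, hp⟩ => by
    change polar Q c d = 0
    rw [polar, hA.2 _ (show (c : V) + d ∈ A from hp), hC.2 _ c.2, hD.2 _ d.2, sub_zero, sub_zero]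
  have hker : LinearMap.ker (β.restrict T) = ((A ⊓ C ⊔ A ⊓ D).comap f).comap T.subtype := by
    ext ⟨⟨c, d⟩, hp⟩
    show ⟨(c, d), hp⟩ ∈ LinearMap.ker (β.restrict T) ↔ (c : V) + d ∈ A ⊓ C ⊔ A ⊓ D
    rw [← polar_eq_zero_iff_mem_sup hB hV hA hC hD c.2 d.2 hp, LinearMap.mem_ker]
    constructor
    · intro h0 c' hc' d' hd' hcd'
      exact LinearMap.congr_fun h0 ⟨(⟨c', hc'⟩, ⟨d', hd'⟩), hcd'⟩
    · intro h0
      ext ⟨⟨c', d'⟩, hp'⟩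
      exact h0 c' c'.2 d' d'.2 hp'
  have hT : T = (A ⊓ (C ⊔ D)).comap f := by
    rw [Submodule.comap_inf, left_eq_inf]
    exact fun p _ => hrange ▸ LinearMap.mem_range_self f p
  have hTr : finrank K T = finrank K ↥(A ⊓ (C ⊔ D)) + finrank K (LinearMap.ker f) := by
    rw [hT]
    exact LinearMap.finrank_comap_of_le_range f (hrange ▸ inf_le_right)
  have hRT : (A ⊓ C ⊔ A ⊓ D).comap f ≤ T :=
    Submodule.comap_mono (sup_le inf_le_left inf_le_left)
  have hrank := (β.restrict T).finrank_range_add_finrank_ker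
  rw [hker, (Submodule.comapSubtypeEquivOfLe hRT).finrank_eq,
    LinearMap.finrank_comap_of_le_range f (hrange ▸ sup_le_sup inf_le_right inf_le_right)] at hrank
  obtain ⟨k, hk⟩ := even_finrank_range_of_isAlt halt
  exact ⟨k, by omega⟩

theorem finrank_sup_sup_add_finrank_inf_inf (hB : (polarBilin Q).Nondegenerate) {h : ℕ}
    (hV : finrank K V = 2 * h) {A C D : Submodule K V}
    (hA : finrank K A = h ∧ ∀ v ∈ A, Q v = 0) (hC : finrank K C = h ∧ ∀ v ∈ C, Q v = 0)
    (hD : finrank K D = h ∧ ∀ v ∈ D, Q v = 0) :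
    finrank K ↥(A ⊔ (C ⊔ D)) + finrank K ↥(A ⊓ (C ⊓ D)) = 2 * h := by
  have horth : orthogonal (polarBilin Q) (A ⊔ (C ⊔ D)) = A ⊓ (C ⊓ D) := by
    rw [orthogonal_sup, orthogonal_sup, orthogonal_polarBilin_eq_self hB hV hA,
      orthogonal_polarBilin_eq_self hB hV hC, orthogonal_polarBilin_eq_self hB hV hD]
  have hdim := finrank_orthogonal hB (A ⊔ (C ⊔ D))
  rw [horth] at hdim
  have := Submodule.finrank_le (A ⊔ (C ⊔ D))
  omega

theorem even_finrank_inf_add (hB : (polarBilin Q).Nondegenerate) {h : ℕ}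
    (hV : finrank K V = 2 * h) {A C D : Submodule K V}
    (hA : finrank K A = h ∧ ∀ v ∈ A, Q v = 0) (hC : finrank K C = h ∧ ∀ v ∈ C, Q v = 0)
    (hD : finrank K D = h ∧ ∀ v ∈ D, Q v = 0) :
    Even (finrank K ↥(A ⊓ C) + finrank K ↥(C ⊓ D) + finrank K ↥(A ⊓ D) + h) := by
  have heven := even_finrank_inf_sup_sub hB hV hA hC hD
  have hsup := finrank_sup_sup_add_finrank_inf_inf hB hV hA hC hD
  have hACD := Submodule.finrank_sup_add_finrank_inf_eq A (C ⊔ D)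
  have hCD := Submodule.finrank_sup_add_finrank_inf_eq C D
  have hR := Submodule.finrank_sup_add_finrank_inf_eq (A ⊓ C) (A ⊓ D)
  rw [← inf_inf_distrib_left] at hR
  have hRW := Submodule.finrank_mono
    (sup_le (inf_le_inf_left A le_sup_left) (inf_le_inf_left A le_sup_right) :
      A ⊓ C ⊔ A ⊓ D ≤ A ⊓ (C ⊔ D))
  have hAr := hA.1
  have hCr := hC.1
  have hDr := hD.1
  rw [Nat.even_iff] at heven ⊢
  omega

theorem exists_adjacent_totallySingular (hsq : ∀ a : K, IsSquare a)
    (hB : (polarBilin Q).Nondegenerate) {h : ℕ} (hV : finrank K V = 2 * h)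
    {X Y : Submodule K V} (hX : finrank K X = h ∧ ∀ v ∈ X, Q v = 0) (hYr : finrank K Y = h)
    (hY : ∀ u ∈ Y, ∀ v ∈ Y, polar Q u v = 0) (hXY : X ⊓ Y = ⊥) {y : V} (hyY : y ∈ Y)
    (hy : Q y ≠ 0) :
    ∃ Z₁ Z₂ : Submodule K V, (finrank K Z₁ = h ∧ ∀ v ∈ Z₁, Q v = 0) ∧
      (finrank K Z₂ = h ∧ ∀ v ∈ Z₂, Q v = 0) ∧ Z₁ ⊓ Z₂ ≤ Y ∧ finrank K ↥(Z₁ ⊓ Z₂) + 1 = h := by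
  obtain ⟨Y₀, hY₀Y, hY₀, hY₀y⟩ := exists_totallySingular_sup_span_singleton_eq hsq hY hyY hy
  have hyY₀ : y ∉ Y₀ := fun h => hy (hY₀ y h)
  have hY₀r : finrank K Y₀ + 1 = h := by
    rw [← hYr, ← hY₀y, Submodule.finrank_sup_span_singleton hyY₀]
  set P := orthogonal (polarBilin Q) Y₀
  have hYP : Y ≤ P := fun v hv u hu => hY u (hY₀Y hu) v hv
  -- `dim X + dim P = 2h + 1`
  obtain ⟨x, ⟨hxX, hxP⟩, hx0⟩ : ∃ x ∈ X ⊓ P, x ≠ 0 := by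
    refine (Submodule.ne_bot_iff _).mp fun h0 => ?_
    have := Submodule.finrank_add_finrank_le_of_disjoint (disjoint_iff.mpr h0)
    rw [hX.1, finrank_orthogonal hB] at this
    omega
  have hxY : x ∉ Y := fun hxY => hx0 (by simpa [hXY] using Submodule.mem_inf.mpr ⟨hxX, hxY⟩)
  -- otherwise `x` is orthogonal to `Y₀ ⊔ K ∙ y = Y`, which is its own orthogonal
  have hxy : polar Q x y ≠ 0 := by
    intro hxy
    apply hxY
    rw [← orthogonal_eq_self hB (fun v hv u hu => hY u hu v hv) (hYr ▸ hV), ← hY₀y]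
    intro v hv
    obtain ⟨u, hu, _, hz, rfl⟩ := Submodule.mem_sup.mp hv
    obtain ⟨c, rfl⟩ := Submodule.mem_span_singleton.mp hz
    show polar Q (u + c • y) x = 0
    rw [polar_add_left, polar_smul_left, polar_comm Q y, hxy, smul_zero, add_zero]
    exact hxP u hu
  set x' := x - (polar Q x y / Q y) • y
  have hZ₁ := forall_map_sup_span_singleton_eq_zero hY₀ hxP (hX.2 x hxX)
  -- `x - x'` is a nonzero multiple of the nonsingular vector `y`
  have hx' : x' ∉ Y₀ ⊔ K ∙ x := fun hx' => by
    have hxZ₁ : x ∈ Y₀ ⊔ K ∙ x := Submodule.mem_sup_right (Submodule.mem_span_singleton_self x)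
    have := hZ₁ _ (Submodule.sub_mem _ hxZ₁ hx')
    rw [sub_sub_cancel, Q.map_smul, smul_eq_mul] at this
    simp [hxy, hy] at this
  have hxY₀ : x ∉ Y₀ := fun h => hxY (hY₀Y h)
  have hx'Y₀ : x' ∉ Y₀ := fun h => hx' (Submodule.mem_sup_left h)
  refine ⟨Y₀ ⊔ K ∙ x, Y₀ ⊔ K ∙ x', ⟨?_, hZ₁⟩, ⟨?_, forall_map_sup_span_singleton_eq_zero hY₀
      (P.sub_mem hxP (P.smul_mem _ (hYP hyY))) (map_sub_polar_div_smul_eq_zero (hX.2 x hxX) hy)⟩,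
    ?_, ?_⟩
  · rw [Submodule.finrank_sup_span_singleton hxY₀, hY₀r]
  · rw [Submodule.finrank_sup_span_singleton hx'Y₀, hY₀r]
  · rw [Submodule.sup_span_singleton_inf_sup_span_singleton hx']
    exact hY₀Y
  · rw [Submodule.sup_span_singleton_inf_sup_span_singleton hx', hY₀r]

theorem ne_and_inf_ne_bot_of_adjacent (hB : (polarBilin Q).Nondegenerate) {h : ℕ}
    (hV : finrank K V = 2 * h) (hh : Even h) {Z₁ Z₂ X₁ X₂ : Submodule K V}
    (hZ₁ : finrank K Z₁ = h ∧ ∀ v ∈ Z₁, Q v = 0) (hZ₂ : finrank K Z₂ = h ∧ ∀ v ∈ Z₂, Q v = 0)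
    (hX₁ : finrank K X₁ = h ∧ ∀ v ∈ X₁, Q v = 0) (hX₂ : finrank K X₂ = h ∧ ∀ v ∈ X₂, Q v = 0)
    (hZ : finrank K ↥(Z₁ ⊓ Z₂) + 1 = h) (hX₁Z : X₁ ⊓ (Z₁ ⊓ Z₂) = ⊥)
    (hX₂Z : X₂ ⊓ (Z₁ ⊓ Z₂) = ⊥) (h₁ : X₁ ⊓ Z₁ ≠ ⊥) (h₂ : X₂ ⊓ Z₂ ≠ ⊥) :
    X₁ ≠ X₂ ∧ X₁ ⊓ X₂ ≠ ⊥ := by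
  have hd₁ := Submodule.finrank_inf_eq_one inf_le_left (hZ₁.1 ▸ hZ) hX₁Z h₁
  have hd₂ := Submodule.finrank_inf_eq_one inf_le_right (hZ₂.1 ▸ hZ) hX₂Z h₂
  -- `Z₁` and `Z₂` have opposite types: every `X` meets them in dimensions of different parity
  have hodd : ∀ {X : Submodule K V}, (finrank K X = h ∧ ∀ v ∈ X, Q v = 0) →
      Odd (finrank K ↥(X ⊓ Z₁) + finrank K ↥(X ⊓ Z₂)) := fun hX => by
    have := even_finrank_inf_add hB hV hX hZ₁ hZ₂
    rw [Nat.even_iff] at this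
    rw [Nat.odd_iff]
    omega
  refine ⟨fun h12 => ?_, fun h0 => ?_⟩
  · subst h12
    have := hodd hX₁
    rw [hd₁, hd₂] at this
    exact Nat.not_odd_iff_even.mpr even_two this
  · have ht := even_finrank_inf_add hB hV hX₁ hZ₁ hX₂
    have ho := hodd hX₂
    rw [inf_comm Z₁ X₂, h0, finrank_bot, hd₁] at ht
    rw [hd₂] at ho
    obtain ⟨r, hr⟩ := hh
    rw [Nat.even_iff] at ht
    rw [Nat.odd_iff] at ho
    omega

end QuadraticMap

theorem stmt_7_general (q m : ℕ) (hqe : Even q) (hm : 2 ≤ m)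
    (K : Type) [Field K] [Fintype K] (hK : Fintype.card K = q)
    (V : Type) [AddCommGroup V] [Module K V]
    (hdim : Module.finrank K V = 4 * m)
    (Q : QuadraticForm K V)
    (hnd : ∀ v : V, (∀ w : V, QuadraticMap.polar Q v w = 0) → v = 0)
    (hhyp : ∃ W : Submodule K V, Module.finrank K W = 2 * m ∧ ∀ v ∈ W, Q v = 0)
    (S : Set (Submodule K V))
    -- `S` is an orthogonal partial spread:
    (hts : ∀ X ∈ S, Module.finrank K X = 2 * m ∧ ∀ v ∈ X, Q v = 0)
    (hdisj : ∀ X ∈ S, ∀ Y ∈ S, X ≠ Y → X ⊓ Y = ⊥)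
    -- maximal as an orthogonal partial spread:
    (hmax : ∀ Y : Submodule K V, Y ∉ S →
      Module.finrank K Y = 2 * m → (∀ v ∈ Y, Q v = 0) →
      ∃ X ∈ S, X ⊓ Y ≠ ⊥) :
    -- `S` is a maximal symplectic partial spread for the polar form:
    (∀ X ∈ S, ∀ u ∈ X, ∀ v ∈ X, QuadraticMap.polar Q u v = 0) ∧
    (∀ Y : Submodule K V, Y ∉ S →
      Module.finrank K Y = 2 * m →
      (∀ u ∈ Y, ∀ v ∈ Y, QuadraticMap.polar Q u v = 0) →
      ∃ X ∈ S, X ⊓ Y ≠ ⊥) := by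
  have : FiniteDimensional K V := Module.finite_of_finrank_pos (by omega)
  have hsq : ∀ a : K, IsSquare a :=
    FiniteField.isSquare_of_char_two <|
      FiniteField.even_card_iff_char_two.mpr (hK ▸ Nat.even_iff.mp hqe)
  have hB : (polarBilin Q).Nondegenerate :=
    ⟨fun v hv => hnd v hv, fun v hv => hnd v fun w => (polar_comm _ _ _).trans (hv w)⟩
  have hV : finrank K V = 2 * (2 * m) := by omega
  refine ⟨fun X hX u hu v hv => le_orthogonal_polarBilin (hts X hX).2 hv u hu,
    fun Y hYS hYr hY => ?_⟩
  by_contra! hcon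
  obtain ⟨y, hyY, hy⟩ : ∃ y ∈ Y, Q y ≠ 0 := by
    by_contra! hsing
    obtain ⟨X, hX, hXY⟩ := hmax Y hYS hYr hsing
    exact hXY (hcon X hX)
  obtain ⟨X, hX⟩ : S.Nonempty := by
    obtain ⟨W, hW⟩ := hhyp
    by_cases hWS : W ∈ S
    exacts [⟨W, hWS⟩, (hmax W hWS hW.1 hW.2).imp fun X h => h.1]
  obtain ⟨Z₁, Z₂, hZ₁, hZ₂, hZY, hZr⟩ :=
    exists_adjacent_totallySingular hsq hB hV (hts X hX) hYr hY (hcon X hX) hyY hy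
  have hSZ : ∀ X ∈ S, X ⊓ (Z₁ ⊓ Z₂) = ⊥ := fun X hX =>
    eq_bot_mono (inf_le_inf_left X hZY) (hcon X hX)
  have hZS : ∀ Z, Z₁ ⊓ Z₂ ≤ Z → Z ∉ S := fun Z hZ hZS => by
    rw [← inf_eq_right.mpr hZ, hSZ Z hZS, finrank_bot] at hZr
    omega
  obtain ⟨X₁, hX₁, h₁⟩ := hmax Z₁ (hZS Z₁ inf_le_left) hZ₁.1 hZ₁.2
  obtain ⟨X₂, hX₂, h₂⟩ := hmax Z₂ (hZS Z₂ inf_le_right) hZ₂.1 hZ₂.2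
  obtain ⟨hne, hmeet⟩ := ne_and_inf_ne_bot_of_adjacent hB hV (even_two_mul m) hZ₁ hZ₂
    (hts X₁ hX₁) (hts X₂ hX₂) hZr (hSZ X₁ hX₁) (hSZ X₂ hX₂) h₁ h₂
  exact hmeet (hdisj X₁ hX₁ X₂ hX₂ hne)

/-- For `q` even and `V` a hyperbolic orthogonal `F_q`-space of
dimension `4m` (`m ≥ 2`), any maximal orthogonal partial spread `Σ` of `V` is
also a maximal symplectic partial spread with respect to the alternating polar
form of the quadratic form. -/
theorem stmt_7 (q m : ℕ) (hq : IsPrimePow q) (hqe : Even q) (hm : 2 ≤ m)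
    (K : Type) [Field K] [Fintype K] (hK : Fintype.card K = q)
    (V : Type) [AddCommGroup V] [Module K V]
    (hdim : Module.finrank K V = 4 * m)
    (Q : QuadraticForm K V)
    (hnd : ∀ v : V, (∀ w : V, QuadraticMap.polar Q v w = 0) → v = 0)
    (hhyp : ∃ W : Submodule K V, Module.finrank K W = 2 * m ∧ ∀ v ∈ W, Q v = 0)
    (S : Set (Submodule K V))
    -- `S` is an orthogonal partial spread:
    (hts : ∀ X ∈ S, Module.finrank K X = 2 * m ∧ ∀ v ∈ X, Q v = 0)
    (hdisj : ∀ X ∈ S, ∀ Y ∈ S, X ≠ Y → X ⊓ Y = ⊥)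
    -- maximal as an orthogonal partial spread:
    (hmax : ∀ Y : Submodule K V, Y ∉ S →
      Module.finrank K Y = 2 * m → (∀ v ∈ Y, Q v = 0) →
      ∃ X ∈ S, X ⊓ Y ≠ ⊥) :
    -- `S` is a maximal symplectic partial spread for the polar form:
    (∀ X ∈ S, ∀ u ∈ X, ∀ v ∈ X, QuadraticMap.polar Q u v = 0) ∧
    (∀ Y : Submodule K V, Y ∉ S →
      Module.finrank K Y = 2 * m →
      (∀ u ∈ Y, ∀ v ∈ Y, QuadraticMap.polar Q u v = 0) →
      ∃ X ∈ S, X ⊓ Y ≠ ⊥) :=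
  stmt_7_general q m hqe hm K hK V hdim Q hnd hhyp S hts hdisj hmax
end

section
/- Let q be a prime power and let Ω be the set of singular points of a nondegenerate elliptic quadric on a 4-dimensional subspace W (of minus type) of a nondegenerate orthogonal F_q-space V. Then Ω is a maximal orthogonal partial ovoid of V: no two points of Ω are perpendicular, and every singular point of V is perpendicular to some point of Ω. -/
/-!
Two distinct perpendicular singular points of `W` would span a totally singular line in `W`,
which an elliptic quadric does not contain. For maximality, the perpendicular space of a
singular point `x` meets `W` in a subspace of dimension at least `3`, and by Chevalley–Warning
every quadratic form in at least three variables over a finite field has a nontrivial zero.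
-/

open Module MvPolynomial

namespace MvPolynomial

variable {K σ : Type*} [Field K] [Fintype K] [Fintype σ]

theorem exists_ne_zero_eval_eq_zero_of_totalDegree_lt {f : MvPolynomial σ K}
    (hf : f.totalDegree < Fintype.card σ) (h0 : eval 0 f = 0) :
    ∃ x ≠ 0, eval x f = 0 := by
  classical
  obtain ⟨p, _⟩ := CharP.exists K
  have : Fact p.Prime := ⟨CharP.char_is_prime K p⟩
  have hp : 1 < Fintype.card { x : σ → K // eval x f = 0 } :=
    (Fact.out : p.Prime).one_lt.trans_le <|
      Nat.le_of_dvd (Fintype.card_pos_iff.2 ⟨⟨0, h0⟩⟩) (char_dvd_card_solutions p hf)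
  obtain ⟨⟨x, hx⟩, hx0⟩ := Fintype.exists_ne_of_one_lt_card hp ⟨0, h0⟩
  exact ⟨x, fun h ↦ hx0 (Subtype.ext h), hx⟩

variable {R : Type*} [CommRing R]

noncomputable def quadraticPoly (A : σ → σ → R) : MvPolynomial σ R :=
  ∑ i, ∑ j, C (A i j) * (X i * X j)

theorem eval_quadraticPoly (A : σ → σ → R) (x : σ → R) :
    eval x (quadraticPoly A) = ∑ i, ∑ j, A i j * (x i * x j) := by
  simp [quadraticPoly]

theorem totalDegree_quadraticPoly_le [Nontrivial R] (A : σ → σ → R) :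
    (quadraticPoly A).totalDegree ≤ 2 := by
  refine totalDegree_finsetSum_le fun i _ ↦ totalDegree_finsetSum_le fun j _ ↦ ?_
  calc (C (A i j) * (X i * X j)).totalDegree
      ≤ (C (A i j)).totalDegree + (X i * X j).totalDegree := totalDegree_mul _ _
    _ ≤ 0 + (1 + 1) := add_le_add (totalDegree_C _).le
        ((totalDegree_mul _ _).trans (add_le_add (totalDegree_X _).le (totalDegree_X _).le))

end MvPolynomial

namespace QuadraticMap

variable {K M : Type*} [Field K] [AddCommGroup M] [Module K M]

theorem exists_ne_zero_apply_eq_zero_of_two_lt_finrank [Fintype K] (Q : QuadraticForm K M)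
    (h : 2 < finrank K M) : ∃ m ≠ 0, Q m = 0 := by
  have : Module.Finite K M := Module.finite_of_finrank_pos (by omega)
  set b := finBasis K M
  -- `Q.toBilin b` is a triangular bilinear form with `Q m = B m m`, also in characteristic `2`
  set A := fun i j ↦ Q.toBilin b (b i) (b j)
  have heval : ∀ x, eval x (quadraticPoly A) = Q (b.equivFun.symm x) := by
    intro x
    rw [eval_quadraticPoly, ← Q.toQuadraticMap_toBilin b, LinearMap.BilinMap.toQuadraticMap_apply]
    simp only [Basis.equivFun_symm_apply, map_sum, map_smul, LinearMap.sum_apply,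
      LinearMap.smul_apply, smul_eq_mul, Finset.mul_sum]
    rw [Finset.sum_comm]
    exact Finset.sum_congr rfl fun i _ ↦ Finset.sum_congr rfl fun j _ ↦ by ring
  obtain ⟨x, hx0, hx⟩ := exists_ne_zero_eval_eq_zero_of_totalDegree_lt
    ((totalDegree_quadraticPoly_le A).trans_lt (by simpa using h))
    (by rw [eval_quadraticPoly]; simp)
  exact ⟨b.equivFun.symm x, b.equivFun.symm.map_ne_zero_iff.2 hx0, by rw [← heval, hx]⟩

theorem apply_eq_zero_of_mem_sup {R M : Type*} [CommRing R] [AddCommGroup M] [Module R M]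
    {Q : QuadraticForm R M} {p₁ p₂ : Submodule R M} (h₁ : ∀ v ∈ p₁, Q v = 0)
    (h₂ : ∀ v ∈ p₂, Q v = 0) (h : ∀ u ∈ p₁, ∀ v ∈ p₂, polar Q u v = 0) :
    ∀ w ∈ p₁ ⊔ p₂, Q w = 0 := by
  intro w hw
  obtain ⟨u, hu, v, hv, rfl⟩ := Submodule.mem_sup.1 hw
  have := h u hu v hv
  rw [polar, h₁ u hu, h₂ v hv] at this
  simpa using this

theorem exists_isotropic_mem_orthogonal [Fintype K] (Q : QuadraticForm K M) (x : M)
    {W : Submodule K M} (hW : 3 < finrank K W) :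
    ∃ m ∈ W, m ≠ 0 ∧ Q m = 0 ∧ polar Q x m = 0 := by
  have : FiniteDimensional K W := Module.finite_of_finrank_pos (by omega)
  set g := (polarBilin Q x).domRestrict W
  have hrange : finrank K (LinearMap.range g) ≤ 1 := finrank_self K ▸ Submodule.finrank_le _
  have hker : 2 < finrank K (LinearMap.ker g) := by
    have := g.finrank_range_add_finrank_ker
    omega
  obtain ⟨m, hm0, hmQ⟩ := ((Q.comp W.subtype).comp (LinearMap.ker g).subtype)
    |>.exists_ne_zero_apply_eq_zero_of_two_lt_finrank hker
  exact ⟨m, (m : W).2, by simpa using hm0, hmQ, LinearMap.mem_ker.1 m.2⟩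

end QuadraticMap

theorem Submodule.finrank_sup_eq_two {K V : Type*} [Field K] [AddCommGroup V] [Module K V]
    {p₁ p₂ : Submodule K V} (h₁ : finrank K p₁ = 1) (h₂ : finrank K p₂ = 1) (hne : p₁ ≠ p₂) :
    finrank K (p₁ ⊔ p₂ : Submodule K V) = 2 := by
  have : FiniteDimensional K p₁ := Module.finite_of_finrank_eq_succ h₁
  have : FiniteDimensional K p₂ := Module.finite_of_finrank_eq_succ h₂
  have hinf : finrank K (p₁ ⊓ p₂ : Submodule K V) = 0 := by
    by_contra h
    have hle : finrank K (p₁ ⊓ p₂ : Submodule K V) ≤ 1 := h₁ ▸ Submodule.finrank_mono inf_le_left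
    exact hne <| (Submodule.eq_of_le_of_finrank_eq inf_le_left (by omega)).symm.trans
      (Submodule.eq_of_le_of_finrank_eq inf_le_right (by omega))
  have := Submodule.finrank_sup_add_finrank_inf_eq p₁ p₂
  omega

theorem stmt_11_general
    (K : Type) [Field K] [Fintype K]
    (V : Type) [AddCommGroup V] [Module K V]
    (Q : QuadraticForm K V)
    (W : Submodule K V) (hW4 : Module.finrank K W = 4)
    -- `W` is of minus type (elliptic): no totally singular line in `W`
    (hWminus : ¬ ∃ L : Submodule K V, L ≤ W ∧ Module.finrank K L = 2 ∧
      ∀ v ∈ L, Q v = 0)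
    -- `Ω` is the set of singular points of `W`:
    (Ω : Set (Submodule K V))
    (hΩ : Ω = {p : Submodule K V | p ≤ W ∧ Module.finrank K p = 1 ∧
      ∀ v ∈ p, Q v = 0}) :
    -- no two (distinct) points of `Ω` are perpendicular:
    (∀ p₁ ∈ Ω, ∀ p₂ ∈ Ω, p₁ ≠ p₂ →
      ∃ u ∈ p₁, ∃ v ∈ p₂, QuadraticMap.polar Q u v ≠ 0) ∧
    -- every singular point of `V` is perpendicular to some point of `Ω`:
    (∀ x : V, x ≠ 0 → Q x = 0 →
      ∃ p ∈ Ω, ∀ v ∈ p, QuadraticMap.polar Q x v = 0) := by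
  subst hΩ
  refine ⟨?_, fun x _ _ ↦ ?_⟩
  · rintro p₁ ⟨h₁W, h₁r, h₁s⟩ p₂ ⟨h₂W, h₂r, h₂s⟩ hne
    by_contra! hperp
    exact hWminus ⟨p₁ ⊔ p₂, sup_le h₁W h₂W, Submodule.finrank_sup_eq_two h₁r h₂r hne,
      QuadraticMap.apply_eq_zero_of_mem_sup h₁s h₂s hperp⟩
  · obtain ⟨m, hmW, hm0, hmQ, hxm⟩ := Q.exists_isotropic_mem_orthogonal x (W := W) (by omega)
    refine ⟨K ∙ m, ⟨(Submodule.span_singleton_le_iff_mem _ _).2 hmW,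
      finrank_span_singleton hm0, ?_⟩, ?_⟩ <;> intro v hv <;>
      obtain ⟨c, rfl⟩ := Submodule.mem_span_singleton.1 hv
    · rw [QuadraticMap.map_smul, hmQ, smul_zero]
    · rw [QuadraticMap.polar_smul_right, hxm, smul_zero]

/-- The set `Ω` of singular points of a nondegenerate elliptic
quadric on a 4-dimensional minus-type subspace `W` of a nondegenerate
orthogonal `F_q`-space `V` is a maximal orthogonal partial ovoid of `V`: no two
points of `Ω` are perpendicular, and every singular point of `V` is
perpendicular to some point of `Ω`. -/
theorem stmt_11 (q : ℕ) (hq : IsPrimePow q)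
    (K : Type) [Field K] [Fintype K] (hK : Fintype.card K = q)
    (V : Type) [AddCommGroup V] [Module K V] [FiniteDimensional K V]
    (Q : QuadraticForm K V)
    -- `V` nondegenerate: no nonzero singular vector in the radical
    (hnd : ∀ v : V, Q v = 0 → (∀ w : V, QuadraticMap.polar Q v w = 0) → v = 0)
    (W : Submodule K V) (hW4 : Module.finrank K W = 4)
    -- the restriction of `Q` to `W` is nondegenerate:
    (hWnd : ∀ v ∈ W, Q v = 0 → (∀ w ∈ W, QuadraticMap.polar Q v w = 0) → v = 0)
    -- `W` is of minus type (elliptic): no totally singular line in `W`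
    (hWminus : ¬ ∃ L : Submodule K V, L ≤ W ∧ Module.finrank K L = 2 ∧
      ∀ v ∈ L, Q v = 0)
    -- `Ω` is the set of singular points of `W`:
    (Ω : Set (Submodule K V))
    (hΩ : Ω = {p : Submodule K V | p ≤ W ∧ Module.finrank K p = 1 ∧
      ∀ v ∈ p, Q v = 0}) :
    -- no two (distinct) points of `Ω` are perpendicular:
    (∀ p₁ ∈ Ω, ∀ p₂ ∈ Ω, p₁ ≠ p₂ →
      ∃ u ∈ p₁, ∃ v ∈ p₂, QuadraticMap.polar Q u v ≠ 0) ∧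
    -- every singular point of `V` is perpendicular to some point of `Ω`:
    (∀ x : V, x ≠ 0 → Q x = 0 →
      ∃ p ∈ Ω, ∀ v ∈ p, QuadraticMap.polar Q x v = 0) :=
  stmt_11_general K V Q W hW4 hWminus Ω hΩ
end

section
/- Let q be an even prime power, F = F_{q³}, K = F_q, T : F → K the trace and N : F → K the norm. Equip V = K ⊕ F ⊕ F ⊕ K with the quadratic form Q(a,β,γ,d) = ad + T(βγ). Then the q³ + 1 points ⟨(0,0,0,1)⟩ and ⟨(1, t, t^{q+q²}, N(t))⟩ for t ∈ F form an ovoid of the O⁺(8,q)-space V: the points are singular, pairwise non-perpendicular, and every maximal totally singular subspace contains exactly one of them. -/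
/-!
Let `σ x = x ^ q` be the Frobenius of `L/K`, of order 3, and `f t = t ^ (q + q²) = σt · σ²t`.
Expanding trace and norm as sums and products over `1, σ, σ²` gives, in characteristic 2,
`T((s + t)(f s + f t)) = N(s + t)`, since the diagonal terms contribute `3 (N s + N t)`.
This makes the points `P_t = (1, t, f t, N t)` singular, and `B(P_s, P_t) = N(s + t)` makes
them pairwise non-perpendicular.

Let `M` be totally singular of dimension 4 not containing `(0,0,0,1)`. Projecting
`W = M ∩ {a = 0}` to its middle coordinates `(β, γ)` is injective, with image `U` totally
isotropic for `T(βγ)`. The identity makes `t ↦ (t, f t) + U` injective, so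
`q³ ≤ q^(6 - dim U)` and `dim U ≤ 3`; hence `dim W = 3`, `M` has a vector `v` with `a = 1`,
and the map `L → (L × L)/U` is onto. Choosing `t` with `(t, f t) - (β, γ)(v) ∈ U` gives
`w ∈ W` with `v + w = P_t`, as singularity pins down its last coordinate.
-/

open Module FiniteField

section Frobenius

variable {K L : Type*} [Field K] [Fintype K] [Field L] [Algebra K L]

local notation "q" => Fintype.card K
local notation "σ" => frobeniusAlgHom K L

theorem pow_card_add_card_sq (x : L) : x ^ (q + q ^ 2) = σ x * σ (σ x) := by
  simp [pow_add, sq, pow_mul]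

variable [Finite L]

theorem frobeniusAlgHom_iterate_three (h3 : finrank K L = 3) (x : L) : σ (σ (σ x)) = x := by
  have h := pow_orderOf_eq_one (frobeniusAlgHom K L)
  rw [orderOf_frobeniusAlgHom, h3] at h
  simpa [pow_succ] using congr($h x)

theorem algebraMap_trace_eq_of_finrank_eq_three (h3 : finrank K L = 3) (x : L) :
    algebraMap K L (Algebra.trace K L x) = x + σ x + σ (σ x) := by
  simp [algebraMap_trace_eq_sum_pow, h3, Finset.sum_range_succ, pow_succ, pow_mul]

theorem algebraMap_norm_eq_of_finrank_eq_three (h3 : finrank K L = 3) (x : L) :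
    algebraMap K L (Algebra.norm K x) = x * σ x * σ (σ x) := by
  simp [algebraMap_norm_eq_prod_pow, h3, Finset.prod_range_succ, pow_succ, pow_mul]

variable [CharP K 2]

theorem trace_add_mul_add_eq_norm_add (h3 : finrank K L = 3) (a b : L) :
    Algebra.trace K L ((a + b) * (a ^ (q + q ^ 2) + b ^ (q + q ^ 2))) =
      Algebra.norm K (a + b) := by
  have := charP_of_injective_algebraMap' K (A := L) 2
  apply (algebraMap K L).injective
  simp only [algebraMap_trace_eq_of_finrank_eq_three h3,
    algebraMap_norm_eq_of_finrank_eq_three h3, pow_card_add_card_sq, map_add, map_mul,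
    frobeniusAlgHom_iterate_three h3]
  linear_combination (a * σ a * σ (σ a) + b * σ b * σ (σ b)) * CharTwo.two_eq_zero (R := L)

theorem trace_mul_pow_eq_norm (h3 : finrank K L = 3) (t : L) :
    Algebra.trace K L (t * t ^ (q + q ^ 2)) = Algebra.norm K t := by
  simpa [zero_pow (Nat.add_pos_left Fintype.card_pos _).ne'] using
    trace_add_mul_add_eq_norm_add h3 t 0

theorem eq_of_trace_add_mul_add_eq_zero (h3 : finrank K L = 3) {s t : L}
    (h : Algebra.trace K L ((s + t) * (s ^ (q + q ^ 2) + t ^ (q + q ^ 2))) = 0) : s = t := by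
  have := charP_of_injective_algebraMap' K (A := L) 2
  rw [trace_add_mul_add_eq_norm_add h3, Algebra.norm_eq_zero_iff, CharTwo.add_eq_zero] at h
  exact h

end Frobenius

section TraceIsotropic

variable {K L : Type*} [Field K] [Fintype K] [Field L] [Algebra K L] [Finite L]

local notation "q" => Fintype.card K

theorem natCard_quotient_eq (h3 : finrank K L = 3) (U : Submodule K (L × L)) :
    Nat.card ((L × L) ⧸ U) = q ^ (6 - finrank K U) := by
  have := U.finrank_quotient_add_finrank
  rw [finrank_prod, h3] at this
  rw [Module.natCard_eq_pow_finrank (K := K), Nat.card_eq_fintype_card]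
  congr 1
  omega

theorem natCard_eq_card_pow_three (h3 : finrank K L = 3) : Nat.card L = q ^ 3 := by
  rw [Module.natCard_eq_pow_finrank (K := K), Nat.card_eq_fintype_card, h3]

variable [CharP K 2] {U : Submodule K (L × L)}

theorem injective_mkQ_graph (h3 : finrank K L = 3)
    (hU : ∀ z ∈ U, Algebra.trace K L (z.1 * z.2) = 0) :
    Function.Injective fun t : L => U.mkQ (t, t ^ (q + q ^ 2)) := by
  have := charP_of_injective_algebraMap' K (A := L) 2
  intro s t hst
  have h := hU _ ((Submodule.Quotient.eq U).mp hst)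
  simp only [Prod.fst_sub, Prod.snd_sub, CharTwo.sub_eq_add] at h
  exact eq_of_trace_add_mul_add_eq_zero h3 h

theorem finrank_le_three_of_isotropic (h3 : finrank K L = 3)
    (hU : ∀ z ∈ U, Algebra.trace K L (z.1 * z.2) = 0) :
    finrank K U ≤ 3 := by
  have : Finite ((L × L) ⧸ U) := Module.finite_of_finite K
  have h := Nat.card_le_card_of_injective _ (injective_mkQ_graph h3 hU)
  rw [natCard_eq_card_pow_three h3, natCard_quotient_eq h3,
    Nat.pow_le_pow_iff_right Fintype.one_lt_card] at h
  omega

theorem exists_graph_sub_mem (h3 : finrank K L = 3)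
    (hU : ∀ z ∈ U, Algebra.trace K L (z.1 * z.2) = 0)
    (hU3 : finrank K U = 3) (c : L × L) :
    ∃ t : L, (t, t ^ (q + q ^ 2)) - c ∈ U := by
  have : Finite ((L × L) ⧸ U) := Module.finite_of_finite K
  have hbij := (injective_mkQ_graph h3 hU).bijective_of_nat_card_le
    (by rw [natCard_eq_card_pow_three h3, natCard_quotient_eq h3, hU3])
  obtain ⟨t, ht⟩ := hbij.2 (U.mkQ c)
  exact ⟨t, (Submodule.Quotient.eq U).mp ht⟩

end TraceIsotropic

theorem LinearMap.finrank_map_add_finrank_inf_ker {K V W : Type*} [Field K] [AddCommGroup V]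
    [Module K V] [FiniteDimensional K V] [AddCommGroup W] [Module K W] (f : V →ₗ[K] W)
    (p : Submodule K V) :
    finrank K (p.map f) + finrank K ↥(p ⊓ LinearMap.ker f) = finrank K p := by
  rw [← LinearMap.range_domRestrict, ← Submodule.map_comap_subtype,
    Submodule.finrank_map_subtype_eq, ← LinearMap.ker_domRestrict,
    LinearMap.finrank_range_add_finrank_ker]

section QuadraticForm

open QuadraticMap

variable {R V : Type*} [CommRing R] [AddCommGroup V] [Module R V] {Q : QuadraticForm R V}

theorem QuadraticMap.polar_eq_zero_of_forall_mem {M : Submodule R V} (hM : ∀ v ∈ M, Q v = 0)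
    {u v : V} (hu : u ∈ M) (hv : v ∈ M) : polar Q u v = 0 := by
  simp [polar, hM u hu, hM v hv, hM _ (M.add_mem hu hv)]

theorem QuadraticMap.map_eq_zero_of_mem_span_singleton {x v : V} (hx : Q x = 0)
    (hv : v ∈ R ∙ x) : Q v = 0 := by
  obtain ⟨c, rfl⟩ := Submodule.mem_span_singleton.mp hv
  simp [QuadraticMap.map_smul, hx]

theorem QuadraticMap.span_singleton_ne_of_polar_ne_zero {x y : V} (hx : Q x = 0)
    (hxy : polar Q x y ≠ 0) : R ∙ x ≠ R ∙ y := by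
  intro h
  obtain ⟨c, rfl⟩ := Submodule.mem_span_singleton.mp (h ▸ Submodule.mem_span_singleton_self y)
  simp [polar_smul_right, polar_self, hx] at hxy

end QuadraticForm

noncomputable section OvoidSpace

open QuadraticMap

variable (K L : Type*) [Field K] [Field L] [Algebra K L]

def quadBilin : LinearMap.BilinForm K (K × L × L × K) :=
  LinearMap.mk₂ K (fun u v => u.1 * v.2.2.2 + Algebra.trace K L (u.2.1 * v.2.2.1))
    (fun _ _ _ => by simp [add_mul]; ring) (fun _ _ _ => by simp; ring)
    (fun _ _ _ => by simp [mul_add]; ring) (fun _ _ _ => by simp; ring)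

def quadForm : QuadraticForm K (K × L × L × K) := (quadBilin K L).toQuadraticMap

@[simps]
def middleProj : (K × L × L × K) →ₗ[K] L × L where
  toFun v := (v.2.1, v.2.2.1)
  map_add' _ _ := rfl
  map_smul' _ _ := rfl

variable {K L}

theorem quadForm_apply (v : K × L × L × K) :
    quadForm K L v = v.1 * v.2.2.2 + Algebra.trace K L (v.2.1 * v.2.2.1) := rfl

theorem polar_quadForm (u v : K × L × L × K) :
    polar (quadForm K L) u v =
      u.1 * v.2.2.2 + v.1 * u.2.2.2 + Algebra.trace K L (u.2.1 * v.2.2.1 + v.2.1 * u.2.2.1) := by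
  rw [quadForm, LinearMap.BilinMap.polar_toQuadraticMap, map_add]
  simp [quadBilin]
  ring

theorem isotropic_map_middleProj {M : Submodule K (K × L × L × K)}
    (hM : ∀ v ∈ M, quadForm K L v = 0) :
    ∀ z ∈ (M ⊓ LinearMap.ker (LinearMap.fst K K (L × L × K))).map (middleProj K L),
      Algebra.trace K L (z.1 * z.2) = 0 := by
  rintro _ ⟨w, ⟨hwM, hw1 : w.1 = 0⟩, rfl⟩
  simpa [quadForm_apply, hw1] using hM w hwM

variable (K L) [Fintype K]

local notation "q" => Fintype.card K

def ovoidPoint (t : L) : K × L × L × K := (1, t, t ^ (q + q ^ 2), Algebra.norm K t)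

def ovoidPoints : Set (K × L × L × K) := insert (0, 0, 0, 1) (Set.range (ovoidPoint K L))

variable {K L} [Finite L] [CharP K 2]

theorem quadForm_ovoidPoint (h3 : finrank K L = 3) (t : L) :
    quadForm K L (ovoidPoint K L t) = 0 := by
  simp [quadForm_apply, ovoidPoint, trace_mul_pow_eq_norm h3, CharTwo.add_self_eq_zero]

theorem quadForm_eq_zero_of_mem_ovoidPoints (h3 : finrank K L = 3) {x : K × L × L × K}
    (hx : x ∈ ovoidPoints K L) : quadForm K L x = 0 := by
  obtain rfl | ⟨t, rfl⟩ := hx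
  · simp [quadForm_apply]
  · exact quadForm_ovoidPoint h3 t

theorem polar_quadForm_ovoidPoint (h3 : finrank K L = 3) (s t : L) :
    polar (quadForm K L) (ovoidPoint K L s) (ovoidPoint K L t) =
      Algebra.trace K L ((s + t) * (s ^ (q + q ^ 2) + t ^ (q + q ^ 2))) := by
  rw [polar_quadForm]
  simp only [ovoidPoint, one_mul, ← trace_mul_pow_eq_norm h3, ← map_add]
  ring_nf

theorem polar_quadForm_ne_zero (h3 : finrank K L = 3) {x y : K × L × L × K}
    (hx : x ∈ ovoidPoints K L) (hy : y ∈ ovoidPoints K L) (hxy : x ≠ y) :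
    polar (quadForm K L) x y ≠ 0 := by
  have polar_e (t : L) : polar (quadForm K L) (0, 0, 0, 1) (ovoidPoint K L t) = 1 := by
    simp [polar_quadForm, ovoidPoint]
  obtain rfl | ⟨s, rfl⟩ := hx <;> obtain rfl | ⟨t, rfl⟩ := hy
  · exact absurd rfl hxy
  · simp [polar_e]
  · simp [polar_comm _ (ovoidPoint K L s), polar_e]
  · rw [polar_quadForm_ovoidPoint h3]
    exact fun h => hxy (congrArg _ (eq_of_trace_add_mul_add_eq_zero h3 h))

theorem ncard_image_span_ovoidPoints (h3 : finrank K L = 3) :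
    ((K ∙ ·) '' ovoidPoints K L).ncard = Nat.card L + 1 := by
  have hinj : Set.InjOn (K ∙ ·) (ovoidPoints K L) := fun x hx y hy hspan => by
    by_contra hxy
    exact span_singleton_ne_of_polar_ne_zero (quadForm_eq_zero_of_mem_ovoidPoints h3 hx)
      (polar_quadForm_ne_zero h3 hx hy hxy) hspan
  have hP : Function.Injective (ovoidPoint K L) := fun s t h => congrArg (·.2.1) h
  rw [hinj.ncard_image, ovoidPoints, Set.ncard_insert_of_notMem, Set.ncard_range_of_injective hP]
  rintro ⟨t, ht⟩
  simpa [ovoidPoint] using congrArg Prod.fst ht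

theorem eq_ovoidPoint_of_quadForm_eq_zero (h3 : finrank K L = 3) {u : K × L × L × K} {t : L}
    (hu1 : u.1 = 1) (hmid : middleProj K L u = (t, t ^ (q + q ^ 2))) (hu : quadForm K L u = 0) :
    u = ovoidPoint K L t := by
  obtain ⟨a, β, γ, d⟩ := u
  simp only [middleProj_apply, Prod.mk.injEq] at hu1 hmid
  obtain ⟨rfl, rfl⟩ := hmid
  subst hu1
  simp only [quadForm_apply, one_mul, trace_mul_pow_eq_norm h3, CharTwo.add_eq_zero] at hu
  rw [hu, ovoidPoint]

theorem exists_mem_ovoidPoints_of_finrank_eq_four (h3 : finrank K L = 3)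
    {M : Submodule K (K × L × L × K)} (hM4 : finrank K M = 4)
    (hM : ∀ v ∈ M, quadForm K L v = 0) : ∃ x ∈ ovoidPoints K L, x ∈ M := by
  by_cases he : ((0, 0, 0, 1) : K × L × L × K) ∈ M
  · exact ⟨_, Set.mem_insert _ _, he⟩
  set fst := LinearMap.fst K K (L × L × K)
  set W := M ⊓ LinearMap.ker fst
  have hisotropic : ∀ z ∈ W.map (middleProj K L), Algebra.trace K L (z.1 * z.2) = 0 :=
    isotropic_map_middleProj hM
  have hker : W ⊓ LinearMap.ker (middleProj K L) = ⊥ := by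
    refine disjoint_self.mp <| Disjoint.mono (inf_le_left.trans inf_le_left) ?_
      ((Submodule.disjoint_span_singleton' (by simp)).mpr he)
    rintro w ⟨⟨-, hw1 : w.1 = 0⟩, hw2 : middleProj K L w = 0⟩
    refine Submodule.mem_span_singleton.mpr ⟨w.2.2.2, ?_⟩
    simp only [middleProj_apply, Prod.mk_eq_zero] at hw2
    ext <;> simp [hw1, hw2]
  have hW : finrank K (M.map fst) + finrank K W = 4 :=
    hM4 ▸ fst.finrank_map_add_finrank_inf_ker M
  have hU := (middleProj K L).finrank_map_add_finrank_inf_ker W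
  rw [hker, finrank_bot, add_zero] at hU
  have hU3 := finrank_le_three_of_isotropic h3 hisotropic
  have hfst_le : finrank K (M.map fst) ≤ 1 := finrank_self K ▸ (M.map fst).finrank_le
  have hfst : M.map fst = ⊤ := Submodule.eq_top_of_finrank_eq (by rw [finrank_self]; omega)
  obtain ⟨v, hvM, hv1 : v.1 = 1⟩ :=
    Submodule.mem_map.mp (hfst ▸ Submodule.mem_top (x := (1 : K)))
  obtain ⟨t, w, ⟨hwM, hw1 : w.1 = 0⟩, hw⟩ :=
    exists_graph_sub_mem h3 hisotropic (by omega) (middleProj K L v)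
  have hvwM := M.add_mem hvM hwM
  refine ⟨ovoidPoint K L t, Set.mem_insert_of_mem _ ⟨t, rfl⟩, ?_⟩
  rwa [← eq_ovoidPoint_of_quadForm_eq_zero h3 (by simp [hv1, hw1])
    (by rw [map_add, hw, add_sub_cancel]) (hM _ hvwM)]

end OvoidSpace

theorem stmt_15_general (q : ℕ) (hqe : Even q)
    (K L : Type) [Field K] [Field L] [Algebra K L] [Fintype K] [Fintype L]
    (hK : Fintype.card K = q) (hL : Fintype.card L = q ^ 3)
    (Q : K × L × L × K → K)
    (hQ : ∀ v : K × L × L × K,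
      Q v = v.1 * v.2.2.2 + Algebra.trace K L (v.2.1 * v.2.2.1))
    (B : K × L × L × K → K × L × L × K → K)
    (hB : ∀ u v, B u v = Q (u + v) - Q u - Q v)
    (Ω : Set (Submodule K (K × L × L × K)))
    (hΩ : Ω = {Submodule.span K {((0 : K), (0 : L), (0 : L), (1 : K))}} ∪
      {P | ∃ t : L, P = Submodule.span K
        {((1 : K), t, t ^ (q + q ^ 2), Algebra.norm K t)}}) :
    Ω.ncard = q ^ 3 + 1 ∧
    -- the points are singular:
    (∀ p ∈ Ω, ∀ v ∈ p, Q v = 0) ∧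
    -- pairwise non-perpendicular:
    (∀ p₁ ∈ Ω, ∀ p₂ ∈ Ω, p₁ ≠ p₂ → ∃ u ∈ p₁, ∃ v ∈ p₂, B u v ≠ 0) ∧
    -- every maximal totally singular subspace contains exactly one of them:
    (∀ M : Submodule K (K × L × L × K), Module.finrank K M = 4 →
      (∀ v ∈ M, Q v = 0) → ∃! p, p ∈ Ω ∧ p ≤ M) := by
  subst hK
  have : CharP K 2 :=
    ringChar.of_eq (FiniteField.even_card_iff_char_two.mpr (Nat.even_iff.mp hqe))
  have h3 : finrank K L = 3 := Nat.pow_right_injective (Nat.succ_le_of_lt Fintype.one_lt_card)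
    (Module.card_eq_pow_finrank.symm.trans hL)
  obtain rfl : Q = quadForm K L := funext hQ
  obtain rfl : B = QuadraticMap.polar (quadForm K L) := funext₂ hB
  obtain rfl : Ω = (K ∙ ·) '' ovoidPoints K L := by
    rw [hΩ]
    ext p
    simp [ovoidPoints, ovoidPoint, eq_comm]
  have hsep : ∀ p₁ ∈ (K ∙ ·) '' ovoidPoints K L, ∀ p₂ ∈ (K ∙ ·) '' ovoidPoints K L, p₁ ≠ p₂ →
      ∃ u ∈ p₁, ∃ v ∈ p₂, QuadraticMap.polar (quadForm K L) u v ≠ 0 := by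
    rintro _ ⟨x, hx, rfl⟩ _ ⟨y, hy, rfl⟩ hne
    exact ⟨x, Submodule.mem_span_singleton_self x, y, Submodule.mem_span_singleton_self y,
      polar_quadForm_ne_zero h3 hx hy (fun h => hne (h ▸ rfl))⟩
  refine ⟨by rw [ncard_image_span_ovoidPoints h3, Nat.card_eq_fintype_card, hL], ?_, hsep, ?_⟩
  · rintro _ ⟨x, hx, rfl⟩ v hv
    exact QuadraticMap.map_eq_zero_of_mem_span_singleton
      (quadForm_eq_zero_of_mem_ovoidPoints h3 hx) hv
  · intro M hM4 hM
    obtain ⟨x, hx, hxM⟩ := exists_mem_ovoidPoints_of_finrank_eq_four h3 hM4 hM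
    have hxM' := (Submodule.span_singleton_le_iff_mem x M).mpr hxM
    refine ⟨K ∙ x, ⟨Set.mem_image_of_mem _ hx, hxM'⟩, fun p ⟨hp, hpM⟩ => ?_⟩
    by_contra hne
    obtain ⟨u, hu, v, hv, huv⟩ := hsep p hp _ (Set.mem_image_of_mem _ hx) hne
    exact huv (QuadraticMap.polar_eq_zero_of_forall_mem hM (hpM hu) (hxM' hv))

/-- For `q` even, `F = F_{q³}`, `K = F_q`, with trace `T` and norm
`N`, the quadratic form `Q(a,β,γ,d) = ad + T(βγ)` on `V = K ⊕ F ⊕ F ⊕ K` makes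
`V` an `O⁺(8,q)`-space, and the `q³+1` points `⟨(0,0,0,1)⟩` and
`⟨(1, t, t^{q+q²}, N(t))⟩` for `t ∈ F` form an ovoid: they are singular,
pairwise non-perpendicular, and every maximal totally singular (i.e.
4-dimensional totally singular) subspace contains exactly one of them. -/
theorem stmt_15 (q : ℕ) (hq : IsPrimePow q) (hqe : Even q)
    (K L : Type) [Field K] [Field L] [Algebra K L] [Fintype K] [Fintype L]
    (hK : Fintype.card K = q) (hL : Fintype.card L = q ^ 3)
    (Q : K × L × L × K → K)
    (hQ : ∀ v : K × L × L × K,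
      Q v = v.1 * v.2.2.2 + Algebra.trace K L (v.2.1 * v.2.2.1))
    (B : K × L × L × K → K × L × L × K → K)
    (hB : ∀ u v, B u v = Q (u + v) - Q u - Q v)
    (Ω : Set (Submodule K (K × L × L × K)))
    (hΩ : Ω = {Submodule.span K {((0 : K), (0 : L), (0 : L), (1 : K))}} ∪
      {P | ∃ t : L, P = Submodule.span K
        {((1 : K), t, t ^ (q + q ^ 2), Algebra.norm K t)}}) :
    Ω.ncard = q ^ 3 + 1 ∧
    -- the points are singular:
    (∀ p ∈ Ω, ∀ v ∈ p, Q v = 0) ∧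
    -- pairwise non-perpendicular:
    (∀ p₁ ∈ Ω, ∀ p₂ ∈ Ω, p₁ ≠ p₂ → ∃ u ∈ p₁, ∃ v ∈ p₂, B u v ≠ 0) ∧
    -- every maximal totally singular subspace contains exactly one of them:
    (∀ M : Submodule K (K × L × L × K), Module.finrank K M = 4 →
      (∀ v ∈ M, Q v = 0) → ∃! p, p ∈ Ω ∧ p ≤ M) :=
  stmt_15_general q hqe K L hK hL Q hQ B hB Ω hΩ
end
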